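/- arXiv:math/0507504 — 5 statements merged into one kernel-verified Lean document; each statement's English description precedes it below -/
import Mathlib

section
/- For two standard Young tableaux S, T with n boxes, if S ≤ T in the partial order generated by the weak Bruhat order via Robinson–Schensted (i.e., there exist permutations y ≤_D w in weak order with P(y) = S, P(w) = T), then the transposed tableaux satisfy S† ≥ T† in the same order. -/
/-- Number of inversions (= Coxeter length) of a permutation of `Fin n`. -/
def invCount {n : ℕ} (w : Equiv.Perm (Fin n)) : ℕ :=
  (Finset.univ.filter (fun p : Fin n × Fin n => p.1 < p.2 ∧ w p.2 < w p.1)).card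

/-- The right weak Bruhat order: `w ≤_D y` iff `y = w * x` with `ℓ(y) = ℓ(w) + ℓ(x)`. -/
def weakLE {n : ℕ} (w y : Equiv.Perm (Fin n)) : Prop :=
  ∃ x : Equiv.Perm (Fin n), y = w * x ∧ invCount y = invCount w + invCount x

/-- Robinson–Schensted row insertion of a letter into a tableau (list of rows). -/
def rowInsert : List (List ℕ) → ℕ → List (List ℕ)
  | [], a => [[a]]
  | r :: rs, a =>
    match r.dropWhile (· < a) with
    | [] => (r ++ [a]) :: rs
    | x :: rest => (r.takeWhile (· < a) ++ a :: rest) :: rowInsert rs x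

/-- The Robinson–Schensted insertion tableau `P(w)` of a word `w`. -/
def RS (w : List ℕ) : List (List ℕ) := w.foldl rowInsert []

/-- The word form `[w(1),…,w(n)]` of a permutation, with 1-based letters. -/
def wordOf {n : ℕ} (w : Equiv.Perm (Fin n)) : List ℕ :=
  (List.finRange n).map (fun k => (w k : ℕ) + 1)

/-- The induced Duflo order on standard Young tableaux: `S ≤ T` iff there are
permutations `y ≤_D w` in right weak Bruhat order with `P(y) = S`, `P(w) = T`. -/
def dufloLE (n : ℕ) (S T : List (List ℕ)) : Prop :=
  ∃ w y : Equiv.Perm (Fin n), weakLE y w ∧ RS (wordOf y) = S ∧ RS (wordOf w) = T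

/-- One column of a tableau. -/
def colT (T : List (List ℕ)) (j : ℕ) : List ℕ := T.filterMap (fun r => r[j]?)

/-- The transposed tableau `T†`. -/
def transposeT (T : List (List ℕ)) : List (List ℕ) :=
  (List.range (T.headD []).length).map (colT T)

-- ############ part 1: permutation algebra ############
namespace S7

def NP (n : ℕ) : ℕ := (Finset.univ.filter (fun p : Fin n × Fin n => p.1 < p.2)).card

-- ######## Chunk A: basic insertion lemmas ########
open List

lemma dropWhile_split (A : List ℕ) {b a : ℕ} (C : List ℕ) (hA : ∀ e ∈ A, e < a)
    (hb : ¬ b < a) : (A ++ b :: C).dropWhile (· < a) = b :: C := by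
  induction A with
  | nil => rw [List.nil_append, List.dropWhile_cons_of_neg (by simpa using hb)]
  | cons e A ih =>
      rw [List.cons_append, List.dropWhile_cons_of_pos (by simpa using hA e (by simp))]
      exact ih (fun x hx => hA x (by simp [hx]))

lemma takeWhile_split (A : List ℕ) {b a : ℕ} (C : List ℕ) (hA : ∀ e ∈ A, e < a)
    (hb : ¬ b < a) : (A ++ b :: C).takeWhile (· < a) = A := by
  induction A with
  | nil => rw [List.nil_append, List.takeWhile_cons_of_neg (by simpa using hb)]
  | cons e A ih =>
      rw [List.cons_append, List.takeWhile_cons_of_pos (by simpa using hA e (by simp))]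
      rw [ih (fun x hx => hA x (by simp [hx]))]

lemma ins_app {r : List ℕ} (R : List (List ℕ)) {a : ℕ} (h : ∀ e ∈ r, e < a) :
    rowInsert (r :: R) a = (r ++ [a]) :: R := by
  have hd : r.dropWhile (· < a) = [] := List.dropWhile_eq_nil_iff.2 (by simpa using h)
  conv_lhs => rw [rowInsert]
  rw [hd]

lemma ins_bump (A : List ℕ) {b a : ℕ} (C : List ℕ) (R : List (List ℕ))
    (hA : ∀ e ∈ A, e < a) (hb : ¬ b < a) :
    rowInsert ((A ++ b :: C) :: R) a = (A ++ a :: C) :: rowInsert R b := by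
  conv_lhs => rw [rowInsert]
  rw [dropWhile_split A C hA hb, takeWhile_split A C hA hb]

lemma ins_nil (a : ℕ) : rowInsert [] a = [[a]] := rfl

-- sorted helpers
lemma sorted_mid {A : List ℕ} {b : ℕ} {C : List ℕ}
    (h : List.Pairwise (· < ·) (A ++ b :: C)) :
    (∀ e ∈ A, e < b) ∧ (∀ e ∈ C, b < e) ∧ List.Pairwise (· < ·) A ∧
      List.Pairwise (· < ·) C ∧ (∀ e ∈ A, ∀ f ∈ C, e < f) := by
  rw [List.pairwise_append] at h
  obtain ⟨hA, hbc, hcross⟩ := h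
  rw [List.pairwise_cons] at hbc
  refine ⟨fun e he => hcross e he b (by simp), hbc.1, hA, hbc.2, ?_⟩
  exact fun e he f hf => hcross e he f (by simp [hf])

lemma sorted_append_mid {A : List ℕ} {b : ℕ} {C : List ℕ}
    (hA : List.Pairwise (· < ·) A) (hC : List.Pairwise (· < ·) C)
    (h1 : ∀ e ∈ A, e < b) (h2 : ∀ e ∈ C, b < e) (h3 : ∀ e ∈ A, ∀ f ∈ C, e < f) :
    List.Pairwise (· < ·) (A ++ b :: C) := by
  rw [List.pairwise_append]
  refine ⟨hA, ?_, ?_⟩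
  · rw [List.pairwise_cons]; exact ⟨h2, hC⟩
  · intro e he f hf
    rcases List.mem_cons.1 hf with rfl | hf
    · exact h1 e he
    · exact h3 e he f hf

def RowsOK (T : List (List ℕ)) : Prop := ∀ r ∈ T, List.Pairwise (· < ·) r

lemma flatten_rowInsert (T : List (List ℕ)) (a : ℕ) :
    (rowInsert T a).flatten.Perm (a :: T.flatten) := by
  induction T generalizing a with
  | nil => simp [rowInsert]
  | cons r R ih =>
    unfold rowInsert
    cases h : r.dropWhile (· < a) with
    | nil =>
      simp only [List.flatten_cons]
      have e1 : (r ++ [a]) ++ R.flatten = r ++ a :: R.flatten := by simp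
      rw [e1]
      exact List.perm_middle
    | cons x rest =>
      set tw := r.takeWhile (· < a) with htw
      have hr : tw ++ x :: rest = r := by
        rw [htw, ← h, List.takeWhile_append_dropWhile]
      simp only [List.flatten_cons]
      refine (List.Perm.append_left _ (ih x)).trans ?_
      rw [← hr]
      have e1 : (tw ++ a :: rest) ++ x :: R.flatten = tw ++ a :: (rest ++ x :: R.flatten) := by
        simp
      have e2 : (tw ++ x :: rest) ++ R.flatten = tw ++ x :: (rest ++ R.flatten) := by simp
      rw [e1, e2]
      refine List.perm_middle.trans (List.Perm.cons a ?_)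
      exact List.Perm.append_left _ List.perm_middle

lemma ins_bump' {s tws : List ℕ} {x' : ℕ} {rest' : List ℕ} (hsplit : tws ++ x' :: rest' = s)
    (R : List (List ℕ)) {x : ℕ} (hA : ∀ e ∈ tws, e < x) (hb : ¬ x' < x) :
    rowInsert (s :: R) x = (tws ++ x :: rest') :: rowInsert R x' := by
  rw [← hsplit]
  exact ins_bump tws rest' R hA hb

-- ######## Chunk B: RowsOK preservation, Knuth machinery ########

lemma dropWhile_head_not {p : ℕ → Bool} {l : List ℕ} : ∀ {x rest}, l.dropWhile p = x :: rest → ¬ p x := by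
  induction l with
  | nil => intro x rest h; simp at h
  | cons e l ih =>
    intro x rest h
    by_cases he : p e
    · rw [List.dropWhile_cons_of_pos he] at h; exact ih h
    · rw [List.dropWhile_cons_of_neg he] at h
      cases h; simpa using he

lemma nodup_flatten_cons {r : List ℕ} {R : List (List ℕ)} (h : (r :: R).flatten.Nodup) :
    r.Nodup ∧ R.flatten.Nodup ∧ ∀ e ∈ r, e ∉ R.flatten := by
  rw [List.flatten_cons, List.nodup_append] at h
  exact ⟨h.1, h.2.1, fun e he hf => h.2.2 e he e hf rfl⟩

lemma rowsOK_ins {T : List (List ℕ)} {a : ℕ} (hrows : RowsOK T) (hnd : T.flatten.Nodup)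
    (ha : a ∉ T.flatten) : RowsOK (rowInsert T a) := by
  induction T generalizing a with
  | nil =>
    intro s hs
    rw [ins_nil] at hs
    simp only [List.mem_singleton] at hs
    subst hs
    simp
  | cons r R ih =>
    have hsr : List.Pairwise (· < ·) r := hrows r (by simp)
    have har : a ∉ r := fun h => ha (by simp [List.flatten_cons, h])
    obtain ⟨hndr, hndR, hdisj⟩ := nodup_flatten_cons hnd
    cases hd : r.dropWhile (· < a) with
    | nil =>
      have hall : ∀ e ∈ r, e < a := by
        have := List.dropWhile_eq_nil_iff.1 hd
        intro e he; simpa using this e he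
      rw [ins_app R hall]
      intro s hs
      rcases List.mem_cons.1 hs with rfl | hs
      · exact sorted_append_mid hsr (by simp) hall (by simp) (by simp)
      · exact hrows s (by simp [hs])
    | cons x rest =>
      set tw := r.takeWhile (· < a) with htw
      have hsplit : tw ++ x :: rest = r := by rw [htw, ← hd, List.takeWhile_append_dropWhile]
      have hxa : ¬ x < a := by simpa using dropWhile_head_not hd
      have hAa : ∀ e ∈ tw, e < a := by
        intro e he; simpa using List.mem_takeWhile_imp he
      have hxr : x ∈ r := by rw [← hsplit]; simp
      have hax : a < x := lt_of_le_of_ne (not_lt.1 hxa) (fun h => har (h ▸ hxr))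
      have hbody := sorted_mid (hsplit ▸ hsr)
      rw [← hsplit, ins_bump tw rest R hAa hxa]
      intro s hs
      rcases List.mem_cons.1 hs with rfl | hs
      · refine sorted_append_mid hbody.2.2.1 hbody.2.2.2.1 hAa
          (fun e he => lt_trans hax (hbody.2.1 e he)) hbody.2.2.2.2
      · have haR : a ∉ R.flatten := fun h => ha (by simp [List.flatten_cons, h])
        exact ih (fun s hs => hrows s (by simp [hs])) hndR (hdisj x hxr) s hs

lemma flatten_RS {l : List ℕ} : (RS l).flatten.Perm l := by
  induction l using List.reverseRecOn with
  | nil => simp [RS]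
  | append_singleton l a ih =>
    have h1 : RS (l ++ [a]) = rowInsert (RS l) a := by
      unfold RS; rw [List.foldl_append]; rfl
    rw [h1]
    refine (flatten_rowInsert (RS l) a).trans ?_
    exact (ih.cons a).trans (List.perm_append_singleton a l).symm

lemma rowsOK_RS {l : List ℕ} (h : l.Nodup) : RowsOK (RS l) := by
  induction l using List.reverseRecOn with
  | nil => intro r hr; simp [RS] at hr
  | append_singleton l a ih =>
    have hnd : l.Nodup := (List.nodup_append.1 h).1
    have ha : a ∉ l := by
      have := (List.nodup_append.1 h).2.2
      intro hal; exact this a hal a (by simp) rfl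
    have h1 : RS (l ++ [a]) = rowInsert (RS l) a := by
      unfold RS; rw [List.foldl_append]; rfl
    rw [h1]
    exact rowsOK_ins (ih hnd) ((flatten_RS).nodup_iff.2 hnd)
      (fun hm => ha (flatten_RS.subset hm))

-- Knuth steps
inductive KStep : List ℕ → List ℕ → Prop
  | k1 (α β : List ℕ) {x y z : ℕ} (h1 : x < y) (h2 : y < z) :
      KStep (α ++ x :: z :: y :: β) (α ++ z :: x :: y :: β)
  | k2 (α β : List ℕ) {x y z : ℕ} (h1 : x < y) (h2 : y < z) :
      KStep (α ++ y :: x :: z :: β) (α ++ y :: z :: x :: β)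

def KE : List ℕ → List ℕ → Prop := Relation.ReflTransGen (fun u v => KStep u v ∨ KStep v u)

lemma KE.refl (l : List ℕ) : KE l l := Relation.ReflTransGen.refl

lemma KE.symm {u v : List ℕ} (h : KE u v) : KE v u := by
  refine (@Relation.ReflTransGen.symmetric _ _ ⟨?_⟩).symm _ _ h
  rintro a b (h | h)
  · exact Or.inr h
  · exact Or.inl h

lemma KE.trans {u v w : List ℕ} (h1 : KE u v) (h2 : KE v w) : KE u w :=
  Relation.ReflTransGen.trans h1 h2

lemma KStep.ke {u v : List ℕ} (h : KStep u v) : KE u v :=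
  Relation.ReflTransGen.single (Or.inl h)

lemma KStep.context {u v : List ℕ} (γ δ : List ℕ) (h : KStep u v) :
    KStep (γ ++ u ++ δ) (γ ++ v ++ δ) := by
  cases h with
  | k1 α β h1 h2 =>
    have := KStep.k1 (γ ++ α) (β ++ δ) h1 h2
    simpa [List.append_assoc] using this
  | k2 α β h1 h2 =>
    have := KStep.k2 (γ ++ α) (β ++ δ) h1 h2
    simpa [List.append_assoc] using this

lemma KE.context {u v : List ℕ} (γ δ : List ℕ) (h : KE u v) :
    KE (γ ++ u ++ δ) (γ ++ v ++ δ) := by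
  refine Relation.ReflTransGen.lift (fun l => γ ++ l ++ δ) ?_ _ _ h
  rintro a b (h | h)
  · exact Or.inl (h.context γ δ)
  · exact Or.inr (h.context γ δ)

lemma KE.context_left {u v : List ℕ} (γ : List ℕ) (h : KE u v) : KE (γ ++ u) (γ ++ v) := by
  have := h.context γ []
  simpa using this

lemma KE.context_right {u v : List ℕ} (δ : List ℕ) (h : KE u v) : KE (u ++ δ) (v ++ δ) := by
  have := h.context [] δ
  simpa using this

lemma KStep.perm {u v : List ℕ} (h : KStep u v) : u.Perm v := by
  cases h with
  | k1 α β h1 h2 =>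
    exact List.Perm.append_left α (List.Perm.swap _ _ _)
  | k2 α β h1 h2 =>
    exact List.Perm.append_left α (List.Perm.cons _ (List.Perm.swap _ _ _))

lemma KE.perm {u v : List ℕ} (h : KE u v) : u.Perm v := by
  induction h with
  | refl => exact List.Perm.refl _
  | tail _ h2 ih =>
    rcases h2 with h2 | h2
    · exact ih.trans h2.perm
    · exact ih.trans h2.perm.symm

lemma KStep.rev {u v : List ℕ} (h : KStep u v) : KStep v.reverse u.reverse := by
  cases h with
  | k1 α β h1 h2 =>
    have := KStep.k2 β.reverse α.reverse h1 h2
    simpa [List.reverse_append, List.append_assoc] using this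
  | k2 α β h1 h2 =>
    have := KStep.k1 β.reverse α.reverse h1 h2
    simpa [List.reverse_append, List.append_assoc] using this

lemma KE.rev {u v : List ℕ} (h : KE u v) : KE u.reverse v.reverse := by
  refine Relation.ReflTransGen.lift List.reverse ?_ _ _ h
  rintro a b (h | h)
  · exact Or.inr h.rev
  · exact Or.inl h.rev

-- moving lemmas
lemma move_left {z : ℕ} (A : List ℕ) (D : List ℕ) (y : ℕ) (hs : List.Pairwise (· < ·) A)
    (hlt : ∀ e ∈ A, e < y) (hyz : y < z) :
    KE (A ++ z :: y :: D) (z :: (A ++ y :: D)) := by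
  induction A using List.reverseRecOn generalizing D y with
  | nil => simp [KE.refl]
  | append_singleton A' e ih =>
    have he : e < y := hlt e (by simp)
    have hstep : KStep (A' ++ e :: z :: y :: D) (A' ++ z :: e :: y :: D) :=
      KStep.k1 A' D he hyz
    have hsA : List.Pairwise (· < ·) A' := hs.sublist (by simp)
    have hltA : ∀ f ∈ A', f < e := by
      intro f hf
      have := (sorted_mid (A := A') (b := e) (C := []) (by simpa using hs)).1
      exact this f hf
    have h2 : KE (A' ++ z :: e :: (y :: D)) (z :: (A' ++ e :: (y :: D))) :=
      ih (y :: D) e hsA hltA (lt_trans he hyz)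
    have e1 : (A' ++ [e]) ++ z :: y :: D = A' ++ e :: z :: y :: D := by simp
    have e2 : z :: ((A' ++ [e]) ++ y :: D) = z :: (A' ++ e :: y :: D) := by simp
    rw [e1, e2]
    exact (hstep.ke).trans h2

lemma move_right {a : ℕ} (C : List ℕ) (b : ℕ) (hs : List.Pairwise (· < ·) C)
    (hlt : ∀ e ∈ C, b < e) (hab : a < b) :
    KE ((b :: C) ++ [a]) (b :: a :: C) := by
  induction C generalizing b with
  | nil => simp [KE.refl]
  | cons c C' ih =>
    have hbc : b < c := hlt c (by simp)
    have hsC : List.Pairwise (· < ·) C' := hs.sublist (by simp)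
    have hltC : ∀ e ∈ C', c < e := by
      rw [List.pairwise_cons] at hs
      exact hs.1
    have h1 : KE ((c :: C') ++ [a]) (c :: a :: C') := ih c hsC hltC (lt_trans hab hbc)
    have h2 : KE (b :: ((c :: C') ++ [a])) (b :: (c :: a :: C')) := h1.context_left [b]
    have hstep : KStep ([] ++ b :: a :: c :: C') ([] ++ b :: c :: a :: C') :=
      KStep.k2 [] C' hab hbc
    have e1 : (b :: c :: C') ++ [a] = b :: ((c :: C') ++ [a]) := by simp
    rw [e1]
    exact h2.trans (by simpa using (hstep.ke).symm)

lemma bump_ke {A : List ℕ} {b : ℕ} {C : List ℕ} {a : ℕ}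
    (hs : List.Pairwise (· < ·) (A ++ b :: C)) (hA : ∀ e ∈ A, e < a) (hab : a < b) :
    KE ((A ++ b :: C) ++ [a]) (b :: (A ++ a :: C)) := by
  obtain ⟨hAb, hbC, hsA, hsC, hAC⟩ := sorted_mid hs
  have h1 : KE (A ++ ((b :: C) ++ [a])) (A ++ (b :: a :: C)) :=
    (move_right C b hsC hbC hab).context_left A
  have h2 : KE (A ++ b :: a :: C) (b :: (A ++ a :: C)) :=
    move_left A C a hsA hA hab
  have e1 : (A ++ b :: C) ++ [a] = A ++ ((b :: C) ++ [a]) := by simp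
  rw [e1]
  exact h1.trans (by simpa using h2)

def rowW : List (List ℕ) → List ℕ
  | [] => []
  | r :: rs => rowW rs ++ r

lemma rowW_ins {T : List (List ℕ)} {a : ℕ} (hrows : RowsOK T) (hnd : T.flatten.Nodup)
    (ha : a ∉ T.flatten) : KE (rowW (rowInsert T a)) (rowW T ++ [a]) := by
  induction T generalizing a with
  | nil => simp [rowInsert, rowW, KE.refl]
  | cons r R ih =>
    have hsr : List.Pairwise (· < ·) r := hrows r (by simp)
    have har : a ∉ r := fun h => ha (by simp [List.flatten_cons, h])
    obtain ⟨hndr, hndR, hdisj⟩ := nodup_flatten_cons hnd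
    cases hd : r.dropWhile (· < a) with
    | nil =>
      have hall : ∀ e ∈ r, e < a := by
        have := List.dropWhile_eq_nil_iff.1 hd
        intro e he; simpa using this e he
      rw [ins_app R hall]
      simp only [rowW]
      rw [← List.append_assoc]
      exact KE.refl _
    | cons x rest =>
      set tw := r.takeWhile (· < a) with htw
      have hsplit : tw ++ x :: rest = r := by rw [htw, ← hd, List.takeWhile_append_dropWhile]
      have hxa : ¬ x < a := by simpa using dropWhile_head_not hd
      have hAa : ∀ e ∈ tw, e < a := by
        intro e he; simpa using List.mem_takeWhile_imp he
      have hxr : x ∈ r := by rw [← hsplit]; simp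
      have hax : a < x := lt_of_le_of_ne (not_lt.1 hxa) (fun h => har (h ▸ hxr))
      rw [← hsplit, ins_bump tw rest R hAa hxa]
      simp only [rowW]
      have h1 : KE (rowW (rowInsert R x) ++ (tw ++ a :: rest))
          ((rowW R ++ [x]) ++ (tw ++ a :: rest)) :=
        (ih (fun s hs => hrows s (by simp [hs])) hndR (hdisj x hxr)).context_right _
      refine h1.trans ?_
      have h2 : KE (x :: (tw ++ a :: rest)) ((tw ++ x :: rest) ++ [a]) :=
        (bump_ke (hsplit ▸ hsr) hAa hax).symm
      have h3 := h2.context_left (rowW R)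
      have e1 : (rowW R ++ [x]) ++ (tw ++ a :: rest) = rowW R ++ x :: (tw ++ a :: rest) := by
        simp
      have e2 : rowW R ++ ((tw ++ x :: rest) ++ [a]) = (rowW R ++ (tw ++ x :: rest)) ++ [a] := by
        simp
      rw [e1, ← e2]
      exact h3

lemma ke_rowW_RS {l : List ℕ} (h : l.Nodup) : KE l (rowW (RS l)) := by
  induction l using List.reverseRecOn with
  | nil => simp [RS, rowW, KE.refl]
  | append_singleton l a ih =>
    have hnd : l.Nodup := (List.nodup_append.1 h).1
    have ha : a ∉ l := by
      have := (List.nodup_append.1 h).2.2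
      intro hal; exact this a hal a (by simp) rfl
    have h1 : RS (l ++ [a]) = rowInsert (RS l) a := by
      unfold RS; rw [List.foldl_append]; rfl
    rw [h1]
    refine ((ih hnd).context_right [a]).trans ?_
    exact (rowW_ins (rowsOK_RS hnd) ((flatten_RS).nodup_iff.2 hnd)
      (fun hm => ha (flatten_RS.subset hm))).symm

-- ######## Chunk C: cascade, zipApp, transpose structure ########

def zipApp : List (List ℕ) → List ℕ → List (List ℕ)
  | U, [] => U
  | [], x :: xs => [x] :: zipApp [] xs
  | u :: us, x :: xs => (u ++ [x]) :: zipApp us xs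

lemma zipApp_nil (U : List (List ℕ)) : zipApp U [] = U := by
  cases U <;> rfl

lemma zipApp_getD (r : List ℕ) (U : List (List ℕ)) (j : ℕ) :
    (zipApp U r).getD j [] = U.getD j [] ++ (if j < r.length then [r.getD j 0] else []) := by
  induction r generalizing U j with
  | nil => simp [zipApp_nil]
  | cons x xs ih =>
    cases U with
    | nil =>
      cases j with
      | zero => simp [zipApp]
      | succ j => simpa [zipApp, Nat.succ_lt_succ_iff] using ih [] j
    | cons u us =>
      cases j with
      | zero => simp [zipApp]
      | succ j => simpa [zipApp, Nat.succ_lt_succ_iff] using ih us j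

lemma zipApp_len (r : List ℕ) (U : List (List ℕ)) :
    (zipApp U r).length = max U.length r.length := by
  induction r generalizing U with
  | nil => simp [zipApp_nil]
  | cons x xs ih =>
    cases U with
    | nil => simp [zipApp, ih]
    | cons u us => simp [zipApp, ih us]

lemma colT_nil (j : ℕ) : colT [] j = [] := rfl

lemma colT_append_singleton (T : List (List ℕ)) (r : List ℕ) (j : ℕ) :
    colT (T ++ [r]) j = colT T j ++ (if j < r.length then [r.getD j 0] else []) := by
  unfold colT
  rw [List.filterMap_append]
  congr 1
  by_cases h : j < r.length
  · rw [if_pos h]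
    simp [List.filterMap_cons, List.getElem?_eq_getElem h, List.getD_eq_getElem r 0 h]
  · rw [if_neg h]
    simp [List.filterMap_cons, List.getElem?_eq_none (le_of_not_gt h)]

lemma zfold_getD (X : List (List ℕ)) (j : ℕ) :
    (List.foldl zipApp [] X).getD j [] = colT X j := by
  induction X using List.reverseRecOn with
  | nil => simp [colT_nil]
  | append_singleton X r ih =>
    rw [List.foldl_append, colT_append_singleton]
    simp only [List.foldl_cons, List.foldl_nil]
    rw [zipApp_getD, ih]

-- cascade
lemma cascade_inner : ∀ (s' : List ℕ) {t : ℕ} {w : List ℕ} {V : List (List ℕ)},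
    s' ≠ [] → List.Pairwise (· < ·) s' → (∀ e ∈ s', e < t) → (∀ e ∈ w, ∀ f ∈ s', e < f) →
    List.foldl rowInsert ((w ++ [t]) :: V) s'.reverse
      = (w ++ [s'.headD 0]) :: List.foldl rowInsert V ((s'.tail ++ [t]).reverse) := by
  intro s'
  induction s' using List.reverseRecOn with
  | nil => intro t w V h; exact absurd rfl h
  | append_singleton s'' m ih =>
    intro t w V _ hsort hlt hw
    have hm_t : m < t := hlt m (by simp)
    have hw_m : ∀ e ∈ w, e < m := fun e he => hw e he m (by simp)
    have hins : rowInsert ((w ++ [t]) :: V) m = (w ++ [m]) :: rowInsert V t := by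
      have := ins_bump w (b := t) (a := m) [] V hw_m (by omega)
      simpa using this
    rw [List.reverse_append, List.reverse_singleton, List.singleton_append, List.foldl_cons, hins]
    rcases List.eq_nil_or_concat s'' with rfl | ⟨s3, m2, hc⟩
    · simp
    · rw [List.concat_eq_append] at hc
      subst hc
      have hmid := sorted_mid (A := s3 ++ [m2]) (b := m) (C := []) (by simpa using hsort)
      have hs'' : List.Pairwise (· < ·) (s3 ++ [m2]) := hmid.2.2.1
      have hlt'' : ∀ e ∈ s3 ++ [m2], e < m := hmid.1
      have hw'' : ∀ e ∈ w, ∀ f ∈ s3 ++ [m2], e < f := fun e he f hf => hw e he f (by simp [List.mem_append] at hf ⊢; tauto)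
      rw [ih (by simp) hs'' hlt'' hw'']
      have e1 : (s3 ++ [m2]).headD 0 = ((s3 ++ [m2]) ++ [m]).headD 0 := by
        cases s3 <;> simp
      have e2 : (((s3 ++ [m2]) ++ [m]).tail ++ [t]).reverse
          = t :: (((s3 ++ [m2]).tail ++ [m]).reverse) := by
        cases s3 <;> simp
      rw [← e1, e2, List.foldl_cons]

lemma cascade : ∀ (s : List ℕ) (U : List (List ℕ)), List.Pairwise (· < ·) s →
    (∀ j, j < s.length → ∀ e ∈ U.getD j [], e < s.getD j 0) →
    List.foldl rowInsert U s.reverse = zipApp U s := by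
  intro s
  induction s with
  | nil => intro U _ _; simp [zipApp_nil]
  | cons s0 s' ih =>
    intro U hs hhyp
    have hU0 : ∀ e ∈ U.getD 0 [], e < s0 := by
      intro e he; simpa using hhyp 0 (by simp) e he
    rcases List.eq_nil_or_concat s' with rfl | ⟨F, m, hc⟩
    · -- single letter
      cases U with
      | nil => simp [rowInsert, zipApp]
      | cons u U' =>
        have : ∀ e ∈ u, e < s0 := by simpa using hU0
        simp only [List.reverse_singleton, List.foldl_cons, List.foldl_nil]
        rw [ins_app U' this]
        simp [zipApp, zipApp_nil]
    · -- at least two letters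
      rw [List.concat_eq_append] at hc
      subst hc
      have hmid := sorted_mid (A := s0 :: F) (b := m) (C := []) (by simpa using hs)
      have hltm : ∀ e ∈ s0 :: F, e < m := hmid.1
      have hsF : List.Pairwise (· < ·) (s0 :: F) := hmid.2.2.1
      have hrev : (s0 :: (F ++ [m])).reverse = m :: (s0 :: F).reverse := by simp
      have hs' : List.Pairwise (· < ·) (F ++ [m]) := hs.sublist (by simp)
      have hhyp' : ∀ j, j < (F ++ [m]).length → ∀ e ∈ (U.tail).getD j [], e < (F ++ [m]).getD j 0 := by
        intro j hj e he
        have := hhyp (j + 1) (by simpa using Nat.succ_lt_succ hj) e (by cases U <;> simpa using he)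
        simpa using this
      cases U with
      | nil =>
        rw [hrev, List.foldl_cons]
        have h1 : rowInsert [] m = (([] : List ℕ) ++ [m]) :: [] := rfl
        rw [h1, cascade_inner (s0 :: F) (by simp) hsF hltm (by simp)]
        simp only [List.headD_cons, List.tail_cons, List.nil_append]
        rw [ih [] hs' (by simpa using hhyp')]
        simp [zipApp]
      | cons u U' =>
        have hu : ∀ e ∈ u, e < m := fun e he => lt_trans (by simpa using hU0 e he)
          (by
            have : s0 < m := hltm s0 (by simp)
            exact this)
        rw [hrev, List.foldl_cons, ins_app U' hu]
        have hwF : ∀ e ∈ u, ∀ f ∈ s0 :: F, e < f := by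
          intro e he f hf
          rcases List.mem_cons.1 hf with rfl | hf
          · exact by simpa using hU0 e he
          · have h1 : s0 < f := by
              rw [List.pairwise_cons] at hsF
              exact hsF.1 f hf
            exact lt_trans (by simpa using hU0 e he) h1
        rw [cascade_inner (s0 :: F) (by simp) hsF hltm hwF]
        simp only [List.headD_cons, List.tail_cons]
        rw [ih U' hs' (by simpa using hhyp')]
        simp [zipApp]

-- standardness (column chain)
def ColOK (r s : List ℕ) : Prop :=
  s.length ≤ r.length ∧ ∀ k < s.length, r.getD k 0 < s.getD k 0

def StdT (T : List (List ℕ)) : Prop := T.IsChain ColOK ∧ RowsOK T ∧ [] ∉ T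

lemma chain_len {R : List (List ℕ)} : ∀ {s : List ℕ}, List.IsChain ColOK (s :: R) →
    ∀ t ∈ R, t.length ≤ s.length := by
  induction R with
  | nil => intro s _ t ht; simp at ht
  | cons r' R' ih =>
    intro s h t ht
    rw [List.isChain_cons_cons] at h
    rcases List.mem_cons.1 ht with rfl | ht
    · exact h.1.1
    · exact le_trans (ih h.2 t ht) h.1.1

lemma col_lt_last {T : List (List ℕ)} {r : List ℕ} (h : List.IsChain ColOK (T ++ [r])) :
    ∀ j, j < r.length → ∀ e ∈ colT T j, e < r.getD j 0 := by
  induction T with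
  | nil => simp [colT_nil]
  | cons s T' ih =>
    intro j hj e he
    have hcc := (List.isChain_cons.1 (by simpa using h))
    have h' : List.IsChain ColOK (T' ++ [r]) := hcc.2
    unfold colT at he
    rw [List.filterMap_cons] at he
    cases hsj : s[j]? with
    | none =>
      rw [hsj] at he
      exact ih h' j hj e he
    | some v =>
      rw [hsj] at he
      have hjs : j < s.length := by
        by_contra hc
        rw [List.getElem?_eq_none_iff.2 (by omega)] at hsj
        simp at hsj
      have hv : v = s.getD j 0 := by
        rw [List.getElem?_eq_getElem hjs] at hsj
        rw [List.getD_eq_getElem s 0 hjs]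
        exact (Option.some.inj hsj).symm
      rcases List.mem_cons.1 he with rfl | he
      · -- e is the entry of s in column j
        subst hv
        cases T' with
        | nil =>
          have : ColOK s r := by
            have := hcc.1 r (by simp)
            exact this
          exact this.2 j hj
        | cons s' T'' =>
          have hrel : ColOK s s' := hcc.1 s' (by simp)
          have hlen : r.length ≤ s'.length := by
            have hc2 : List.IsChain ColOK (s' :: (T'' ++ [r])) := by simpa using h'
            exact chain_len hc2 r (by simp)
          have hjs' : j < s'.length := lt_of_lt_of_le hj hlen
          have h1 : s.getD j 0 < s'.getD j 0 := hrel.2 j hjs'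
          have h2 : s'.getD j 0 < r.getD j 0 := by
            refine ih h' j hj _ ?_
            unfold colT
            rw [List.filterMap_cons, List.getElem?_eq_getElem hjs']
            rw [← List.getD_eq_getElem s' 0 hjs']
            simp
          exact lt_trans h1 h2
      · exact ih h' j hj e he

lemma std_prefix {T : List (List ℕ)} {r : List ℕ} (h : StdT (T ++ [r])) : StdT T := by
  refine ⟨(List.isChain_append.1 h.1).1, fun s hs => h.2.1 s (by simp [hs]), fun hc => h.2.2 (by simp [hc])⟩

lemma rowW_append_singleton : ∀ (X : List (List ℕ)) (r : List ℕ), rowW (X ++ [r]) = r ++ rowW X := by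
  intro X
  induction X with
  | nil => intro r; simp [rowW]
  | cons x X ih =>
    intro r
    show rowW (X ++ [r]) ++ x = r ++ (rowW X ++ x)
    rw [ih, List.append_assoc]

lemma RS_rowW_rev {T : List (List ℕ)} (hstd : StdT T) :
    RS ((rowW T).reverse) = List.foldl zipApp [] T := by
  induction T using List.reverseRecOn with
  | nil => simp [rowW, RS]
  | append_singleton T r ih =>
    have hT : StdT T := std_prefix hstd
    have hsr : List.Pairwise (· < ·) r := hstd.2.1 r (by simp)
    rw [rowW_append_singleton, List.reverse_append]
    unfold RS
    rw [List.foldl_append]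
    have ihr : RS ((rowW T).reverse) = List.foldl zipApp [] T := ih hT
    rw [show List.foldl rowInsert [] (rowW T).reverse = RS ((rowW T).reverse) from rfl, ihr]
    rw [cascade r (List.foldl zipApp [] T) hsr ?hyp]
    · rw [List.foldl_append]
      rfl
    case hyp =>
      intro j hj e he
      rw [zfold_getD] at he
      exact col_lt_last hstd.1 j hj e he

-- ######## Chunk D: StdT preservation ########

lemma getD_mid_self (A : List ℕ) (a : ℕ) (C : List ℕ) :
    (A ++ a :: C).getD A.length 0 = a := by
  rw [List.getD_append_right _ _ _ _ (le_refl _)]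
  simp

lemma getD_mid_of_lt {A : List ℕ} {k : ℕ} (a : ℕ) (C : List ℕ) (h : k < A.length) :
    (A ++ a :: C).getD k 0 = A.getD k 0 := List.getD_append _ _ _ _ h

lemma getD_mid_of_gt {A : List ℕ} {k : ℕ} (a b : ℕ) (C : List ℕ) (h : A.length < k) :
    (A ++ a :: C).getD k 0 = (A ++ b :: C).getD k 0 := by
  rw [List.getD_append_right _ _ _ _ (le_of_lt h), List.getD_append_right _ _ _ _ (le_of_lt h)]
  obtain ⟨m, hm⟩ : ∃ m, k - A.length = m + 1 := ⟨k - A.length - 1, by omega⟩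
  rw [hm]
  simp

lemma sorted_getD_lt {r : List ℕ} (h : List.Pairwise (· < ·) r) {i j : ℕ} (hij : i < j)
    (hj : j < r.length) : r.getD i 0 < r.getD j 0 := by
  have hi : i < r.length := lt_trans hij hj
  rw [List.getD_eq_getElem r 0 hi, List.getD_eq_getElem r 0 hj]
  have := (List.sortedLT_iff_pairwise.2 h).strictMono_get (show (⟨i, hi⟩ : Fin r.length) < ⟨j, hj⟩ from hij)
  simpa using this

lemma getD_mem' {r : List ℕ} {k : ℕ} (h : k < r.length) : r.getD k 0 ∈ r := by
  rw [List.getD_eq_getElem r 0 h]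
  exact List.getElem_mem h

lemma std_tail {r : List ℕ} {R : List (List ℕ)} (h : StdT (r :: R)) : StdT R :=
  ⟨(List.isChain_cons.1 h.1).2, fun s hs => h.2.1 s (by simp [hs]), fun hc => h.2.2 (by simp [hc])⟩

lemma std_ins {T : List (List ℕ)} {a : ℕ} (hstd : StdT T) (hnd : T.flatten.Nodup)
    (ha : a ∉ T.flatten) : StdT (rowInsert T a) := by
  induction T generalizing a with
  | nil =>
    refine ⟨by simp [rowInsert], fun s hs => ?_, by simp [rowInsert]⟩
    rw [ins_nil] at hs; simp only [List.mem_singleton] at hs; subst hs; simp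
  | cons r R ih =>
    have hsr : List.Pairwise (· < ·) r := hstd.2.1 r (by simp)
    have har : a ∉ r := fun h => ha (by simp [List.flatten_cons, h])
    have haR : a ∉ R.flatten := fun h => ha (by simp [List.flatten_cons, h])
    obtain ⟨hndr, hndR, hdisj⟩ := nodup_flatten_cons hnd
    have hstdR : StdT R := std_tail hstd
    have hchainhead := (List.isChain_cons.1 hstd.1).1
    -- rows are fine in all cases via rowsOK_ins
    have hrowsall : RowsOK (rowInsert (r :: R) a) := rowsOK_ins hstd.2.1 hnd ha
    cases hd : r.dropWhile (· < a) with
    | nil =>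
      have hall : ∀ e ∈ r, e < a := by
        have := List.dropWhile_eq_nil_iff.1 hd
        intro e he; simpa using this e he
      rw [ins_app R hall] at hrowsall ⊢
      refine ⟨?_, hrowsall, ?_⟩
      · rw [List.isChain_cons]
        refine ⟨?_, (List.isChain_cons.1 hstd.1).2⟩
        intro s hs
        have hcs : ColOK r s := hchainhead s hs
        refine ⟨le_trans hcs.1 (by simp), ?_⟩
        intro k hk
        rw [List.getD_append _ _ _ _ (lt_of_lt_of_le hk hcs.1)]
        exact hcs.2 k hk
      · intro hc
        rcases List.mem_cons.1 hc with h | h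
        · exact absurd h.symm (by simp)
        · exact hstd.2.2 (by simp [h])
    | cons x rest =>
      set tw := r.takeWhile (· < a) with htw
      have hsplit : tw ++ x :: rest = r := by rw [htw, ← hd, List.takeWhile_append_dropWhile]
      have hxa : ¬ x < a := by simpa using dropWhile_head_not hd
      have hAa : ∀ e ∈ tw, e < a := by
        intro e he; simpa using List.mem_takeWhile_imp he
      have hxr : x ∈ r := by rw [← hsplit]; simp
      have hax : a < x := lt_of_le_of_ne (not_lt.1 hxa) (fun h => har (h ▸ hxr))
      have hins : rowInsert (r :: R) a = (tw ++ a :: rest) :: rowInsert R x := by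
        rw [← hsplit]; exact ins_bump tw rest R hAa hxa
      rw [hins] at hrowsall ⊢
      have hxR : x ∉ R.flatten := hdisj x hxr
      have ihR : StdT (rowInsert R x) := ih hstdR hndR hxR
      have hlenr : r.length = tw.length + 1 + rest.length := by
        rw [← hsplit]; simp; omega
      have hrtw : r.getD tw.length 0 = x := by rw [← hsplit]; exact getD_mid_self tw x rest
      have hrowlen : (tw ++ a :: rest).length = r.length := by rw [← hsplit]; simp
      -- getD of new row
      have hnewrow : ∀ k, k ≠ tw.length → (tw ++ a :: rest).getD k 0 = r.getD k 0 := by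
        intro k hk
        rcases lt_or_gt_of_ne hk with h | h
        · rw [getD_mid_of_lt a rest h, ← hsplit, getD_mid_of_lt x rest h]
        · rw [getD_mid_of_gt a x rest h, hsplit]
      have hnewmid : (tw ++ a :: rest).getD tw.length 0 = a := getD_mid_self tw a rest
      refine ⟨?_, hrowsall, ?_⟩
      · -- the chain
        rw [List.isChain_cons]
        refine ⟨?_, ihR.1⟩
        intro s' hs'
        -- analyze rowInsert R x
        cases R with
        | nil =>
          rw [ins_nil] at hs'
          simp only [List.head?_cons, Option.mem_def, Option.some.injEq] at hs'
          subst hs'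
          refine ⟨by simp only [List.length_singleton, hrowlen, hlenr]; omega, ?_⟩
          intro k hk
          simp only [List.length_singleton] at hk
          interval_cases k
          have h0 : (tw ++ a :: rest).getD 0 0 ≤ a := by
            rcases Nat.eq_zero_or_pos tw.length with h | h
            · rw [List.eq_nil_of_length_eq_zero h]
              exact le_of_eq rfl
            · rw [getD_mid_of_lt a rest h]
              exact le_of_lt (hAa _ (getD_mem' h))
          have h1 : ([x] : List ℕ).getD 0 0 = x := rfl
          rw [h1]
          exact lt_of_le_of_lt h0 hax
        | cons s R' =>
          have hcs : ColOK r s := hchainhead s (by simp)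
          have hss : List.Pairwise (· < ·) s := hstd.2.1 s (by simp)
          have hxs : x ∉ s := fun h => hxR (by simp [List.flatten_cons, h])
          cases hds : s.dropWhile (· < x) with
          | nil =>
            have halls : ∀ e ∈ s, e < x := by
              have := List.dropWhile_eq_nil_iff.1 hds
              intro e he; simpa using this e he
            rw [ins_app R' halls] at hs'
            simp only [List.head?_cons, Option.mem_def, Option.some.injEq] at hs'
            subst hs'
            have hsle : s.length ≤ tw.length := by
              by_contra hc
              push_neg at hc
              have h1 : r.getD tw.length 0 < s.getD tw.length 0 := hcs.2 tw.length hc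
              rw [hrtw] at h1
              exact absurd h1 (not_lt.2 (le_of_lt (halls _ (getD_mem' hc))))
            refine ⟨by simp [hrowlen, hlenr]; omega, ?_⟩
            intro k hk
            simp only [List.length_append, List.length_singleton] at hk
            rcases lt_or_eq_of_le (Nat.lt_succ_iff.1 hk) with hks | hks
            · -- k < s.length
              rw [List.getD_append _ _ _ _ hks, hnewrow k (by omega)]
              exact hcs.2 k hks
            · -- k = s.length
              subst hks
              rw [getD_mid_self s x []]
              rcases lt_or_eq_of_le hsle with h | h
              · rw [hnewrow _ (by omega), ← hrtw]
                exact sorted_getD_lt hsr h (by omega)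
              · rw [h, hnewmid]; exact hax
          | cons x' rest' =>
            set tws := s.takeWhile (· < x) with htws
            have hsplits : tws ++ x' :: rest' = s := by
              rw [htws, ← hds, List.takeWhile_append_dropWhile]
            have hx'x : ¬ x' < x := by simpa using dropWhile_head_not hds
            have htwsx : ∀ e ∈ tws, e < x := by
              intro e he; simpa using List.mem_takeWhile_imp he
            rw [ins_bump' hsplits R' htwsx hx'x] at hs'
            simp only [List.head?_cons, Option.mem_def, Option.some.injEq] at hs'
            subst hs'
            have hslen : s.length = tws.length + 1 + rest'.length := by
              rw [← hsplits]; simp; omega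
            have hstw : s.getD tws.length 0 = x' := by
              rw [← hsplits]; exact getD_mid_self tws x' rest'
            have hnews : ∀ k, k ≠ tws.length → (tws ++ x :: rest').getD k 0 = s.getD k 0 := by
              intro k hk
              rcases lt_or_gt_of_ne hk with h | h
              · rw [getD_mid_of_lt x rest' h, ← hsplits, getD_mid_of_lt x' rest' h]
              · rw [getD_mid_of_gt x x' rest' h, hsplits]
            have hnewsmid : (tws ++ x :: rest').getD tws.length 0 = x := getD_mid_self tws x rest'
            have htwsle : tws.length ≤ tw.length := by
              by_contra hc
              push_neg at hc
              have h1 : r.getD tw.length 0 < s.getD tw.length 0 := hcs.2 tw.length (by omega)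
              rw [hrtw] at h1
              have h2 : s.getD tw.length 0 ∈ tws := by
                have : s.getD tw.length 0 = tws.getD tw.length 0 := by
                  rw [← hsplits, getD_mid_of_lt x' rest' hc]
                rw [this]
                exact getD_mem' hc
              exact absurd h1 (not_lt.2 (le_of_lt (htwsx _ h2)))
            have hlens : (tws ++ x :: rest').length = s.length := by rw [← hsplits]; simp
            refine ⟨by rw [hlens, hrowlen]; exact hcs.1, ?_⟩
            intro k hk
            rw [hlens] at hk
            by_cases hk1 : k = tws.length
            · subst hk1
              rw [hnewsmid]
              by_cases hk2 : tws.length = tw.length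
              · rw [hk2, hnewmid]; exact hax
              · rw [hnewrow _ hk2, ← hrtw]
                exact sorted_getD_lt hsr (by omega) (by omega)
            · rw [hnews k hk1]
              by_cases hk2 : k = tw.length
              · subst hk2
                rw [hnewmid]
                have h1 : r.getD tw.length 0 < s.getD tw.length 0 := hcs.2 _ hk
                rw [hrtw] at h1
                exact lt_trans hax h1
              · rw [hnewrow k hk2]
                exact hcs.2 k hk
      · -- no empty rows
        intro hc
        rcases List.mem_cons.1 hc with h | h
        · exact absurd h.symm (by simp)
        · exact ihR.2.2 h

lemma std_RS {l : List ℕ} (h : l.Nodup) : StdT (RS l) := by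
  induction l using List.reverseRecOn with
  | nil => exact ⟨by simp [RS], fun r hr => by simp [RS] at hr, by simp [RS]⟩
  | append_singleton l a ih =>
    have hnd : l.Nodup := (List.nodup_append.1 h).1
    have ha : a ∉ l := by
      have := (List.nodup_append.1 h).2.2
      intro hal; exact this a hal a (by simp) rfl
    have h1 : RS (l ++ [a]) = rowInsert (RS l) a := by
      unfold RS; rw [List.foldl_append]; rfl
    rw [h1]
    exact std_ins (ih hnd) ((flatten_RS).nodup_iff.2 hnd) (fun hm => ha (flatten_RS.subset hm))

-- ######## Chunk E: triple insertion lemma ########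

lemma split_of_dropWhile {r : List ℕ} {v b : ℕ} {C : List ℕ}
    (hsr : List.Pairwise (· < ·) r) (hv : v ∉ r) (hd : r.dropWhile (· < v) = b :: C) :
    r.takeWhile (· < v) ++ b :: C = r ∧ (∀ e ∈ r.takeWhile (· < v), e < v) ∧ v < b
      ∧ (∀ e ∈ C, b < e) ∧ b ∈ r := by
  have hsplit : r.takeWhile (· < v) ++ b :: C = r := by
    rw [← hd, List.takeWhile_append_dropWhile]
  have hb : ¬ b < v := by simpa using dropWhile_head_not hd
  have hbr : b ∈ r := by rw [← hsplit]; simp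
  have h1 : ∀ e ∈ r.takeWhile (· < v), e < v := fun e he => by
    simpa using List.mem_takeWhile_imp he
  have hsr' : List.Pairwise (· < ·) (r.takeWhile (· < v) ++ b :: C) := by rw [hsplit]; exact hsr
  exact ⟨hsplit, h1, lt_of_le_of_ne (not_lt.1 hb) (fun h => hv (h ▸ hbr)),
    (sorted_mid hsr').2.1, hbr⟩

lemma all_of_dropWhile_nil {r : List ℕ} {v : ℕ} (hd : r.dropWhile (· < v) = []) :
    ∀ e ∈ r, e < v := by
  have := List.dropWhile_eq_nil_iff.1 hd
  intro e he; simpa using this e he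


lemma split_of_dropWhile_ex {r : List ℕ} {v b : ℕ} {C : List ℕ}
    (hsr : List.Pairwise (· < ·) r) (hv : v ∉ r) (hd : r.dropWhile (· < v) = b :: C) :
    ∃ A : List ℕ, A ++ b :: C = r ∧ (∀ e ∈ A, e < v) ∧ v < b
      ∧ (∀ e ∈ C, b < e) ∧ b ∈ r ∧ List.Pairwise (· < ·) A ∧ List.Pairwise (· < ·) C
      ∧ (∀ e ∈ A, e < b) := by
  obtain ⟨h1, h2, h3, h4, h5⟩ := split_of_dropWhile hsr hv hd
  have hsr' : List.Pairwise (· < ·) (r.takeWhile (· < v) ++ b :: C) := by rw [h1]; exact hsr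
  obtain ⟨hAb, _, hsA, hsC, _⟩ := sorted_mid hsr'
  exact ⟨r.takeWhile (· < v), h1, h2, h3, h4, h5, hsA, hsC, hAb⟩

lemma triple : ∀ (T : List (List ℕ)), RowsOK T → T.flatten.Nodup →
    ∀ x y z : ℕ, x < y → y < z → x ∉ T.flatten → y ∉ T.flatten → z ∉ T.flatten →
    (rowInsert (rowInsert (rowInsert T x) z) y = rowInsert (rowInsert (rowInsert T z) x) y)
  ∧ (rowInsert (rowInsert (rowInsert T y) x) z = rowInsert (rowInsert (rowInsert T y) z) x) := by
  intro T
  induction T with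
  | nil =>
    intro _ _ x y z hxy hyz _ _ _
    constructor
    · have e1 : rowInsert ([] : List (List ℕ)) x = [[x]] := rfl
      have e2 : rowInsert [[x]] z = [[x, z]] :=
        ins_app [] (by intro e he; simp at he; omega)
      have e3 : rowInsert [[x, z]] y = [x, y] :: rowInsert [] z :=
        ins_bump' (show [x] ++ z :: [] = [x, z] from rfl) []
          (by intro e he; simp at he; omega) (by omega)
      have f1 : rowInsert ([] : List (List ℕ)) z = [[z]] := rfl
      have f2 : rowInsert [[z]] x = [x] :: rowInsert [] z :=
        ins_bump' (show ([] : List ℕ) ++ z :: [] = [z] from rfl) []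
          (by intro e he; simp at he) (by omega)
      have f3 : rowInsert ([x] :: rowInsert [] z) y = ([x] ++ [y]) :: rowInsert [] z :=
        ins_app _ (by intro e he; simp at he; omega)
      rw [e1, e2, e3, f1, f2, f3]
      simp [ins_nil]
    · have e1 : rowInsert ([] : List (List ℕ)) y = [[y]] := rfl
      have e2 : rowInsert [[y]] x = [x] :: rowInsert [] y :=
        ins_bump' (show ([] : List ℕ) ++ y :: [] = [y] from rfl) []
          (by intro e he; simp at he) (by omega)
      have e3 : rowInsert ([x] :: rowInsert [] y) z = ([x] ++ [z]) :: rowInsert [] y :=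
        ins_app _ (by intro e he; simp at he; omega)
      have f2 : rowInsert [[y]] z = [[y, z]] :=
        ins_app [] (by intro e he; simp at he; omega)
      have f3 : rowInsert [[y, z]] x = [x, z] :: rowInsert [] y :=
        ins_bump' (show ([] : List ℕ) ++ y :: [z] = [y, z] from rfl) []
          (by intro e he; simp at he) (by omega)
      rw [e1, e2, e3, f2, f3]
      simp [ins_nil]
  | cons r R ih =>
    intro hrows hnd x y z hxy hyz hx hy hz
    have hsr : List.Pairwise (· < ·) r := hrows r (by simp)
    obtain ⟨hndr, hndR, hdisj⟩ := nodup_flatten_cons hnd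
    have hxr : x ∉ r := fun h => hx (by simp [List.flatten_cons, h])
    have hyr : y ∉ r := fun h => hy (by simp [List.flatten_cons, h])
    have hzr : z ∉ r := fun h => hz (by simp [List.flatten_cons, h])
    have hxR : x ∉ R.flatten := fun h => hx (by simp [List.flatten_cons, h])
    have hyR : y ∉ R.flatten := fun h => hy (by simp [List.flatten_cons, h])
    have hzR : z ∉ R.flatten := fun h => hz (by simp [List.flatten_cons, h])
    have hrowsR : RowsOK R := fun s hs => hrows s (by simp [hs])
    have ihR := ih hrowsR hndR
    constructor
    · -- ############ K1 ############
      cases hdx : r.dropWhile (· < x) with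
      | nil =>
        -- case C : everything below x
        have hall_x : ∀ e ∈ r, e < x := all_of_dropWhile_nil hdx
        have hall_y : ∀ e ∈ r, e < y := fun e he => lt_trans (hall_x e he) hxy
        have hall_z : ∀ e ∈ r, e < z := fun e he => lt_trans (hall_y e he) hyz
        have e1 : rowInsert (r :: R) x = (r ++ [x]) :: R := ins_app R hall_x
        have e2 : rowInsert ((r ++ [x]) :: R) z = ((r ++ [x]) ++ [z]) :: R :=
          ins_app _ (by
            intro e he
            rcases List.mem_append.1 he with h | h
            · exact hall_z e h
            · simp at h; omega)
        have e3 : rowInsert (((r ++ [x]) ++ [z]) :: R) y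
            = ((r ++ [x]) ++ y :: []) :: rowInsert R z :=
          ins_bump' rfl R (by
            intro e he
            rcases List.mem_append.1 he with h | h
            · exact hall_y e h
            · simp at h; omega) (by omega)
        have f1 : rowInsert (r :: R) z = (r ++ [z]) :: R := ins_app R hall_z
        have f2 : rowInsert ((r ++ [z]) :: R) x = (r ++ x :: []) :: rowInsert R z :=
          ins_bump' rfl R hall_x (by omega)
        have f3 : rowInsert ((r ++ x :: []) :: rowInsert R z) y
            = ((r ++ x :: []) ++ [y]) :: rowInsert R z :=
          ins_app _ (by
            intro e he
            rcases List.mem_append.1 he with h | h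
            · exact hall_y e h
            · simp at h; omega)
        rw [e1, e2, e3, f1, f2, f3]
      | cons u Cu =>
        obtain ⟨Ax, hsplx, hAx, hxu, huCu, hur, hsAx, hsCu, hAxu⟩ :=
          split_of_dropWhile_ex hsr hxr hdx
        have hAxr : ∀ e ∈ Ax, e ∈ r := fun e he => by rw [← hsplx]; simp [he]
        have hCur : ∀ e ∈ Cu, e ∈ r := fun e he => by rw [← hsplx]; simp [he]
        have huR : u ∉ R.flatten := hdisj u hur
        have hAxy : ∀ e ∈ Ax, e < y := fun e he => lt_trans (hAx e he) hxy
        have hAxz : ∀ e ∈ Ax, e < z := fun e he => lt_trans (hAxy e he) hyz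
        have e1 : rowInsert (r :: R) x = (Ax ++ x :: Cu) :: rowInsert R u :=
          ins_bump' hsplx R hAx (by omega)
        rw [e1]
        rcases lt_or_gt_of_ne (show u ≠ y from fun h => hyr (h ▸ hur)) with huy | huy
        · -- D1 : u < y
          cases hdz : Cu.dropWhile (· < z) with
          | nil =>
            -- D1a
            have hallCu : ∀ e ∈ Cu, e < z := all_of_dropWhile_nil hdz
            have hall_z : ∀ e ∈ r, e < z := by
              intro e he
              rw [← hsplx] at he
              rcases List.mem_append.1 he with h | h
              · exact hAxz e h
              · rcases List.mem_cons.1 h with rfl | h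
                · omega
                · exact hallCu e h
            have e2 : rowInsert ((Ax ++ x :: Cu) :: rowInsert R u) z
                = ((Ax ++ x :: Cu) ++ [z]) :: rowInsert R u :=
              ins_app _ (by
                intro e he
                rcases List.mem_append.1 he with h | h
                · exact hAxz e h
                · rcases List.mem_cons.1 h with rfl | h
                  · omega
                  · exact hallCu e h)
            have f1 : rowInsert (r :: R) z = (r ++ [z]) :: R := ins_app R hall_z
            have f2 : rowInsert ((r ++ [z]) :: R) x
                = (Ax ++ x :: (Cu ++ [z])) :: rowInsert R u :=
              ins_bump' (by rw [← hsplx]; simp) R hAx (by omega)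
            cases hdyC : Cu.dropWhile (· < y) with
            | cons p D2 =>
              -- D1a-i : y bumps p inside Cu
              obtain ⟨D1, hsplp, hD1y, hyp, hpD2, hpCu, hsD1, hsD2, hD1p⟩ :=
                split_of_dropWhile_ex hsCu (fun h => hyr (hCur y h)) hdyC
              have e3 : rowInsert (((Ax ++ x :: Cu) ++ [z]) :: rowInsert R u) y
                  = ((Ax ++ x :: D1) ++ y :: (D2 ++ [z])) :: rowInsert (rowInsert R u) p :=
                ins_bump' (by rw [← hsplp]; simp) _ (by
                  intro e he
                  rcases List.mem_append.1 he with h | h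
                  · exact hAxy e h
                  · rcases List.mem_cons.1 h with rfl | h
                    · omega
                    · exact hD1y e h) (by omega)
              have f3 : rowInsert ((Ax ++ x :: (Cu ++ [z])) :: rowInsert R u) y
                  = ((Ax ++ x :: D1) ++ y :: (D2 ++ [z])) :: rowInsert (rowInsert R u) p :=
                ins_bump' (by rw [← hsplp]; simp) _ (by
                  intro e he
                  rcases List.mem_append.1 he with h | h
                  · exact hAxy e h
                  · rcases List.mem_cons.1 h with rfl | h
                    · omega
                    · exact hD1y e h) (by omega)
              rw [e2, e3, f1, f2, f3]
            | nil =>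
              -- D1a-ii : all of Cu below y, y bumps the appended z
              have hallCuY : ∀ e ∈ Cu, e < y := all_of_dropWhile_nil hdyC
              have e3 : rowInsert (((Ax ++ x :: Cu) ++ [z]) :: rowInsert R u) y
                  = ((Ax ++ x :: Cu) ++ y :: []) :: rowInsert (rowInsert R u) z :=
                ins_bump' rfl _ (by
                  intro e he
                  rcases List.mem_append.1 he with h | h
                  · exact hAxy e h
                  · rcases List.mem_cons.1 h with rfl | h
                    · omega
                    · exact hallCuY e h) (by omega)
              have f3 : rowInsert ((Ax ++ x :: (Cu ++ [z])) :: rowInsert R u) y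
                  = ((Ax ++ x :: Cu) ++ y :: []) :: rowInsert (rowInsert R u) z :=
                ins_bump' (by simp) _ (by
                  intro e he
                  rcases List.mem_append.1 he with h | h
                  · exact hAxy e h
                  · rcases List.mem_cons.1 h with rfl | h
                    · omega
                    · exact hallCuY e h) (by omega)
              rw [e2, e3, f1, f2, f3]
          | cons q E2 =>
            -- D1b : z bumps q in Cu
            obtain ⟨E1, hsplq, hE1z, hzq, hqE2, hqCu, hsE1, hsE2, hE1q⟩ :=
              split_of_dropWhile_ex hsCu (fun h => hzr (hCur z h)) hdz
            have hE1Cu : ∀ e ∈ E1, e ∈ Cu := fun e he => by rw [← hsplq]; simp [he]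
            have hqR : q ∉ R.flatten := hdisj q (hCur q hqCu)
            have e2 : rowInsert ((Ax ++ x :: Cu) :: rowInsert R u) z
                = ((Ax ++ x :: E1) ++ z :: E2) :: rowInsert (rowInsert R u) q :=
              ins_bump' (by rw [← hsplq]; simp) _ (by
                intro e he
                rcases List.mem_append.1 he with h | h
                · exact hAxz e h
                · rcases List.mem_cons.1 h with rfl | h
                  · omega
                  · exact hE1z e h) (by omega)
            have f1 : rowInsert (r :: R) z = ((Ax ++ u :: E1) ++ z :: E2) :: rowInsert R q :=
              ins_bump' (by rw [← hsplx, ← hsplq]; simp) R (by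
                intro e he
                rcases List.mem_append.1 he with h | h
                · exact hAxz e h
                · rcases List.mem_cons.1 h with rfl | h
                  · omega
                  · exact hE1z e h) (by omega)
            have f2 : rowInsert (((Ax ++ u :: E1) ++ z :: E2) :: rowInsert R q) x
                = (Ax ++ x :: (E1 ++ z :: E2)) :: rowInsert (rowInsert R q) u :=
              ins_bump' (by simp) _ hAx (by omega)
            cases hdyE : E1.dropWhile (· < y) with
            | cons p F2 =>
              -- D1b-i
              obtain ⟨F1, hsplp, hF1y, hyp, hpF2, hpE1, hsF1, hsF2, hF1p⟩ :=
                split_of_dropWhile_ex hsE1 (fun h => hyr (hCur y (hE1Cu y h))) hdyE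
              have hpR : p ∉ R.flatten := hdisj p (hCur p (hE1Cu p hpE1))
              have hup : u < p := huCu p (hE1Cu p hpE1)
              have hpq : p < q := hE1q p hpE1
              have e3 : rowInsert (((Ax ++ x :: E1) ++ z :: E2) :: rowInsert (rowInsert R u) q) y
                  = ((Ax ++ x :: F1) ++ y :: (F2 ++ z :: E2))
                      :: rowInsert (rowInsert (rowInsert R u) q) p :=
                ins_bump' (by rw [← hsplp]; simp) _ (by
                  intro e he
                  rcases List.mem_append.1 he with h | h
                  · exact hAxy e h
                  · rcases List.mem_cons.1 h with rfl | h
                    · omega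
                    · exact hF1y e h) (by omega)
              have f3 : rowInsert ((Ax ++ x :: (E1 ++ z :: E2)) :: rowInsert (rowInsert R q) u) y
                  = ((Ax ++ x :: F1) ++ y :: (F2 ++ z :: E2))
                      :: rowInsert (rowInsert (rowInsert R q) u) p :=
                ins_bump' (by rw [← hsplp]; simp) _ (by
                  intro e he
                  rcases List.mem_append.1 he with h | h
                  · exact hAxy e h
                  · rcases List.mem_cons.1 h with rfl | h
                    · omega
                    · exact hF1y e h) (by omega)
              rw [e2, e3, f1, f2, f3, (ihR u p q hup hpq huR hpR hqR).1]
            | nil =>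
              -- D1b-ii
              have hallE1y : ∀ e ∈ E1, e < y := all_of_dropWhile_nil hdyE
              have huz : u < z := lt_trans huy hyz
              have e3 : rowInsert (((Ax ++ x :: E1) ++ z :: E2) :: rowInsert (rowInsert R u) q) y
                  = ((Ax ++ x :: E1) ++ y :: E2)
                      :: rowInsert (rowInsert (rowInsert R u) q) z :=
                ins_bump (Ax ++ x :: E1) E2 _ (by
                  intro e he
                  rcases List.mem_append.1 he with h | h
                  · exact hAxy e h
                  · rcases List.mem_cons.1 h with rfl | h
                    · omega
                    · exact hallE1y e h) (by omega)
              have f3 : rowInsert ((Ax ++ x :: (E1 ++ z :: E2)) :: rowInsert (rowInsert R q) u) y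
                  = ((Ax ++ x :: E1) ++ y :: E2)
                      :: rowInsert (rowInsert (rowInsert R q) u) z :=
                ins_bump' (by simp) _ (by
                  intro e he
                  rcases List.mem_append.1 he with h | h
                  · exact hAxy e h
                  · rcases List.mem_cons.1 h with rfl | h
                    · omega
                    · exact hallE1y e h) (by omega)
              rw [e2, e3, f1, f2, f3, (ihR u z q huz hzq huR hzR hqR).1]
        · -- u > y
          rcases lt_or_gt_of_ne (show u ≠ z from fun h => hzr (h ▸ hur)) with huz | huz
          · -- D2 : y < u < z
            cases hdz : Cu.dropWhile (· < z) with
            | nil =>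
              -- D2a
              have hallCu : ∀ e ∈ Cu, e < z := all_of_dropWhile_nil hdz
              have hall_z : ∀ e ∈ r, e < z := by
                intro e he
                rw [← hsplx] at he
                rcases List.mem_append.1 he with h | h
                · exact hAxz e h
                · rcases List.mem_cons.1 h with rfl | h
                  · omega
                  · exact hallCu e h
              have e2 : rowInsert ((Ax ++ x :: Cu) :: rowInsert R u) z
                  = ((Ax ++ x :: Cu) ++ [z]) :: rowInsert R u :=
                ins_app _ (by
                  intro e he
                  rcases List.mem_append.1 he with h | h
                  · exact hAxz e h
                  · rcases List.mem_cons.1 h with rfl | h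
                    · omega
                    · exact hallCu e h)
              have f1 : rowInsert (r :: R) z = (r ++ [z]) :: R := ins_app R hall_z
              have f2 : rowInsert ((r ++ [z]) :: R) x
                  = (Ax ++ x :: (Cu ++ [z])) :: rowInsert R u :=
                ins_bump' (by rw [← hsplx]; simp) R hAx (by omega)
              cases Cu with
              | nil =>
                -- D2a-ii
                have e3 : rowInsert (((Ax ++ x :: []) ++ [z]) :: rowInsert R u) y
                    = ((Ax ++ x :: []) ++ y :: []) :: rowInsert (rowInsert R u) z :=
                  ins_bump' rfl _ (by
                    intro e he
                    rcases List.mem_append.1 he with h | h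
                    · exact hAxy e h
                    · simp at h; omega) (by omega)
                have f3 : rowInsert ((Ax ++ x :: ([] ++ [z])) :: rowInsert R u) y
                    = ((Ax ++ x :: []) ++ y :: []) :: rowInsert (rowInsert R u) z :=
                  ins_bump' (by simp) _ (by
                    intro e he
                    rcases List.mem_append.1 he with h | h
                    · exact hAxy e h
                    · simp at h; omega) (by omega)
                rw [e2, e3, f1, f2, f3]
              | cons c0 Cu' =>
                -- D2a-i
                have hc0Cu : (c0 : ℕ) ∈ c0 :: Cu' := by simp
                have hyc0 : y < c0 := lt_trans huy (huCu c0 hc0Cu)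
                have hc0R : c0 ∉ R.flatten := hdisj c0 (hCur c0 hc0Cu)
                have hsCu' : ∀ e ∈ Cu', c0 < e := by
                  rw [List.pairwise_cons] at hsCu
                  exact hsCu.1
                have e3 : rowInsert (((Ax ++ x :: c0 :: Cu') ++ [z]) :: rowInsert R u) y
                    = ((Ax ++ [x]) ++ y :: (Cu' ++ [z])) :: rowInsert (rowInsert R u) c0 :=
                  ins_bump' (by simp) _ (by
                    intro e he
                    rcases List.mem_append.1 he with h | h
                    · exact hAxy e h
                    · simp at h; omega) (by omega)
                have f3 : rowInsert ((Ax ++ x :: (c0 :: Cu' ++ [z])) :: rowInsert R u) y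
                    = ((Ax ++ [x]) ++ y :: (Cu' ++ [z])) :: rowInsert (rowInsert R u) c0 :=
                  ins_bump' (by simp) _ (by
                    intro e he
                    rcases List.mem_append.1 he with h | h
                    · exact hAxy e h
                    · simp at h; omega) (by omega)
                rw [e2, e3, f1, f2, f3]
            | cons q E2 =>
              -- D2b
              obtain ⟨E1, hsplq, hE1z, hzq, hqE2, hqCu, hsE1, hsE2, hE1q⟩ :=
                split_of_dropWhile_ex hsCu (fun h => hzr (hCur z h)) hdz
              have hE1Cu : ∀ e ∈ E1, e ∈ Cu := fun e he => by rw [← hsplq]; simp [he]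
              have hqR : q ∉ R.flatten := hdisj q (hCur q hqCu)
              have huq : u < q := huCu q hqCu
              have e2 : rowInsert ((Ax ++ x :: Cu) :: rowInsert R u) z
                  = ((Ax ++ x :: E1) ++ z :: E2) :: rowInsert (rowInsert R u) q :=
                ins_bump' (by rw [← hsplq]; simp) _ (by
                  intro e he
                  rcases List.mem_append.1 he with h | h
                  · exact hAxz e h
                  · rcases List.mem_cons.1 h with rfl | h
                    · omega
                    · exact hE1z e h) (by omega)
              have f1 : rowInsert (r :: R) z = ((Ax ++ u :: E1) ++ z :: E2) :: rowInsert R q :=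
                ins_bump' (by rw [← hsplx, ← hsplq]; simp) R (by
                  intro e he
                  rcases List.mem_append.1 he with h | h
                  · exact hAxz e h
                  · rcases List.mem_cons.1 h with rfl | h
                    · omega
                    · exact hE1z e h) (by omega)
              have f2 : rowInsert (((Ax ++ u :: E1) ++ z :: E2) :: rowInsert R q) x
                  = (Ax ++ x :: (E1 ++ z :: E2)) :: rowInsert (rowInsert R q) u :=
                ins_bump' (by simp) _ hAx (by omega)
              cases E1 with
              | nil =>
                -- D2b-ii
                have e3 : rowInsert (((Ax ++ x :: []) ++ z :: E2)
                      :: rowInsert (rowInsert R u) q) y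
                    = ((Ax ++ x :: []) ++ y :: E2)
                      :: rowInsert (rowInsert (rowInsert R u) q) z :=
                  ins_bump (Ax ++ x :: []) E2 _ (by
                    intro e he
                    rcases List.mem_append.1 he with h | h
                    · exact hAxy e h
                    · simp at h; omega) (by omega)
                have f3 : rowInsert ((Ax ++ x :: ([] ++ z :: E2))
                      :: rowInsert (rowInsert R q) u) y
                    = ((Ax ++ x :: []) ++ y :: E2)
                      :: rowInsert (rowInsert (rowInsert R q) u) z :=
                  ins_bump' (by simp) _ (by
                    intro e he
                    rcases List.mem_append.1 he with h | h
                    · exact hAxy e h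
                    · simp at h; omega) (by omega)
                rw [e2, e3, f1, f2, f3, (ihR u z q huz hzq huR hzR hqR).1]
              | cons c0 E1' =>
                -- D2b-i
                have hc0E1 : (c0 : ℕ) ∈ c0 :: E1' := by simp
                have hc0Cu : (c0 : ℕ) ∈ Cu := hE1Cu c0 hc0E1
                have hyc0 : y < c0 := lt_trans huy (huCu c0 hc0Cu)
                have hc0R : c0 ∉ R.flatten := hdisj c0 (hCur c0 hc0Cu)
                have huc0 : u < c0 := huCu c0 hc0Cu
                have hc0q : c0 < q := hE1q c0 hc0E1
                have e3 : rowInsert (((Ax ++ x :: c0 :: E1') ++ z :: E2)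
                      :: rowInsert (rowInsert R u) q) y
                    = ((Ax ++ [x]) ++ y :: (E1' ++ z :: E2))
                      :: rowInsert (rowInsert (rowInsert R u) q) c0 :=
                  ins_bump' (by simp) _ (by
                    intro e he
                    rcases List.mem_append.1 he with h | h
                    · exact hAxy e h
                    · simp at h; omega) (by omega)
                have f3 : rowInsert ((Ax ++ x :: (c0 :: E1' ++ z :: E2))
                      :: rowInsert (rowInsert R q) u) y
                    = ((Ax ++ [x]) ++ y :: (E1' ++ z :: E2))
                      :: rowInsert (rowInsert (rowInsert R q) u) c0 :=
                  ins_bump' (by simp) _ (by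
                    intro e he
                    rcases List.mem_append.1 he with h | h
                    · exact hAxy e h
                    · simp at h; omega) (by omega)
                rw [e2, e3, f1, f2, f3, (ihR u c0 q huc0 hc0q huR hc0R hqR).1]
          · -- D3 : u > z
            cases Cu with
            | nil =>
              -- D3b
              have e2 : rowInsert ((Ax ++ x :: []) :: rowInsert R u) z
                  = ((Ax ++ x :: []) ++ [z]) :: rowInsert R u :=
                ins_app _ (by
                  intro e he
                  rcases List.mem_append.1 he with h | h
                  · exact hAxz e h
                  · simp at h; omega)
              have e3 : rowInsert (((Ax ++ x :: []) ++ [z]) :: rowInsert R u) y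
                  = ((Ax ++ x :: []) ++ y :: []) :: rowInsert (rowInsert R u) z :=
                ins_bump' rfl _ (by
                  intro e he
                  rcases List.mem_append.1 he with h | h
                  · exact hAxy e h
                  · simp at h; omega) (by omega)
              have f1 : rowInsert (r :: R) z = (Ax ++ z :: []) :: rowInsert R u :=
                ins_bump' hsplx R hAxz (by omega)
              have f2 : rowInsert ((Ax ++ z :: []) :: rowInsert R u) x
                  = (Ax ++ x :: []) :: rowInsert (rowInsert R u) z :=
                ins_bump Ax [] _ hAx (by omega)
              have f3 : rowInsert ((Ax ++ x :: []) :: rowInsert (rowInsert R u) z) y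
                  = ((Ax ++ x :: []) ++ [y]) :: rowInsert (rowInsert R u) z :=
                ins_app _ (by
                  intro e he
                  rcases List.mem_append.1 he with h | h
                  · exact hAxy e h
                  · simp at h; omega)
              rw [e2, e3, f1, f2, f3]
            | cons c0 Cu' =>
              -- D3a
              have hc0Cu : (c0 : ℕ) ∈ c0 :: Cu' := by simp
              have hc0R : c0 ∉ R.flatten := hdisj c0 (hCur c0 hc0Cu)
              have hzc0 : z < c0 := lt_trans huz (huCu c0 hc0Cu)
              have huc0 : u < c0 := huCu c0 hc0Cu
              have e2 : rowInsert ((Ax ++ x :: c0 :: Cu') :: rowInsert R u) z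
                  = ((Ax ++ [x]) ++ z :: Cu') :: rowInsert (rowInsert R u) c0 :=
                ins_bump' (by simp) _ (by
                  intro e he
                  rcases List.mem_append.1 he with h | h
                  · exact hAxz e h
                  · simp at h; omega) (by omega)
              have e3 : rowInsert (((Ax ++ [x]) ++ z :: Cu') :: rowInsert (rowInsert R u) c0) y
                  = ((Ax ++ [x]) ++ y :: Cu')
                    :: rowInsert (rowInsert (rowInsert R u) c0) z :=
                ins_bump (Ax ++ [x]) Cu' _ (by
                  intro e he
                  rcases List.mem_append.1 he with h | h
                  · exact hAxy e h
                  · simp at h; omega) (by omega)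
              have f1 : rowInsert (r :: R) z = (Ax ++ z :: (c0 :: Cu')) :: rowInsert R u :=
                ins_bump' hsplx R hAxz (by omega)
              have f2 : rowInsert ((Ax ++ z :: (c0 :: Cu')) :: rowInsert R u) x
                  = (Ax ++ x :: (c0 :: Cu')) :: rowInsert (rowInsert R u) z :=
                ins_bump Ax (c0 :: Cu') _ hAx (by omega)
              have f3 : rowInsert ((Ax ++ x :: (c0 :: Cu'))
                    :: rowInsert (rowInsert R u) z) y
                  = ((Ax ++ [x]) ++ y :: Cu')
                    :: rowInsert (rowInsert (rowInsert R u) z) c0 :=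
                ins_bump' (by simp) _ (by
                  intro e he
                  rcases List.mem_append.1 he with h | h
                  · exact hAxy e h
                  · simp at h; omega) (by omega)
              rw [e2, e3, f1, f2, f3, (ihR z u c0 huz huc0 hzR huR hc0R).2]
    · -- ############ K2 ############
      cases hdy : r.dropWhile (· < y) with
      | nil =>
        have hall_y : ∀ e ∈ r, e < y := all_of_dropWhile_nil hdy
        have hall_z : ∀ e ∈ r, e < z := fun e he => lt_trans (hall_y e he) hyz
        rw [ins_app R hall_y]
        cases hdx : r.dropWhile (· < x) with
        | nil =>
          have hall_x : ∀ e ∈ r, e < x := all_of_dropWhile_nil hdx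
          have e1 : rowInsert ((r ++ [y]) :: R) x = (r ++ [x]) :: rowInsert R y :=
            ins_bump' rfl R hall_x (by omega)
          have e2 : rowInsert ((r ++ [x]) :: rowInsert R y) z
              = ((r ++ [x]) ++ [z]) :: rowInsert R y :=
            ins_app _ (by
              intro e he
              rcases List.mem_append.1 he with h | h
              · exact hall_z e h
              · simp at h; omega)
          have f1 : rowInsert ((r ++ [y]) :: R) z = ((r ++ [y]) ++ [z]) :: R :=
            ins_app _ (by
              intro e he
              rcases List.mem_append.1 he with h | h
              · exact hall_z e h
              · simp at h; omega)
          have f2 : rowInsert (((r ++ [y]) ++ [z]) :: R) x = (r ++ x :: [z]) :: rowInsert R y :=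
            ins_bump' (by simp) R hall_x (by omega)
          rw [e1, e2, f1, f2]
          simp
        | cons u Cx =>
          obtain ⟨hsplx, hAx, hxu, huC, hur⟩ := split_of_dropWhile hsr hxr hdx
          set Ax := r.takeWhile (· < x) with hAxdef
          have hAxr : ∀ e ∈ Ax, e ∈ r := fun e he => by rw [← hsplx]; simp [he]
          have hCxr : ∀ e ∈ Cx, e ∈ r := fun e he => by rw [← hsplx]; simp [he]
          have huR : u ∉ R.flatten := hdisj u hur
          have e1 : rowInsert ((r ++ [y]) :: R) x
              = (Ax ++ x :: (Cx ++ [y])) :: rowInsert R u :=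
            ins_bump' (by rw [← hsplx]; simp) R hAx (by omega)
          have e2 : rowInsert ((Ax ++ x :: (Cx ++ [y])) :: rowInsert R u) z
              = ((Ax ++ x :: (Cx ++ [y])) ++ [z]) :: rowInsert R u :=
            ins_app _ (by
              intro e he
              rcases List.mem_append.1 he with h | h
              · exact hall_z e (hAxr e h)
              · rcases List.mem_cons.1 h with rfl | h
                · omega
                · rcases List.mem_append.1 h with h2 | h2
                  · exact hall_z e (hCxr e h2)
                  · simp at h2; omega)
          have f1 : rowInsert ((r ++ [y]) :: R) z = ((r ++ [y]) ++ [z]) :: R :=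
            ins_app _ (by
              intro e he
              rcases List.mem_append.1 he with h | h
              · exact hall_z e h
              · simp at h; omega)
          have f2 : rowInsert (((r ++ [y]) ++ [z]) :: R) x
              = (Ax ++ x :: (Cx ++ [y] ++ [z])) :: rowInsert R u :=
            ins_bump' (by rw [← hsplx]; simp) R hAx (by omega)
          rw [e1, e2, f1, f2]
          simp
      | cons u0 C =>
        obtain ⟨hsply, hAy, hyu0, hu0C, hu0r⟩ := split_of_dropWhile hsr hyr hdy
        set Ay := r.takeWhile (· < y) with hAydef
        have hAyr : ∀ e ∈ Ay, e ∈ r := fun e he => by rw [← hsply]; simp [he]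
        have hCr : ∀ e ∈ C, e ∈ r := fun e he => by rw [← hsply]; simp [he]
        have hmidy : List.Pairwise (· < ·) (Ay ++ u0 :: C) := by rw [hsply]; exact hsr
        obtain ⟨hAyu0, _, hsAy, hsC, hAyC⟩ := sorted_mid hmidy
        have hu0R : u0 ∉ R.flatten := hdisj u0 hu0r
        have hzC : z ∉ C := fun h => hzr (hCr z h)
        have step0 : rowInsert (r :: R) y = (Ay ++ y :: C) :: rowInsert R u0 :=
          ins_bump' hsply R hAy (by omega)
        rw [step0]
        cases hdx : Ay.dropWhile (· < x) with
        | nil =>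
          have hAx : ∀ e ∈ Ay, e < x := all_of_dropWhile_nil hdx
          cases hdz : C.dropWhile (· < z) with
          | nil =>
            have hallC : ∀ e ∈ C, e < z := all_of_dropWhile_nil hdz
            have e1 : rowInsert ((Ay ++ y :: C) :: rowInsert R u0) x
                = (Ay ++ x :: C) :: rowInsert (rowInsert R u0) y :=
              ins_bump Ay C _ hAx (by omega)
            have e2 : rowInsert ((Ay ++ x :: C) :: rowInsert (rowInsert R u0) y) z
                = ((Ay ++ x :: C) ++ [z]) :: rowInsert (rowInsert R u0) y :=
              ins_app _ (by
                intro e he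
                rcases List.mem_append.1 he with h | h
                · exact lt_trans (hAy e h) hyz
                · rcases List.mem_cons.1 h with rfl | h
                  · omega
                  · exact hallC e h)
            have f1 : rowInsert ((Ay ++ y :: C) :: rowInsert R u0) z
                = ((Ay ++ y :: C) ++ [z]) :: rowInsert R u0 :=
              ins_app _ (by
                intro e he
                rcases List.mem_append.1 he with h | h
                · exact lt_trans (hAy e h) hyz
                · rcases List.mem_cons.1 h with rfl | h
                  · omega
                  · exact hallC e h)
            have f2 : rowInsert (((Ay ++ y :: C) ++ [z]) :: rowInsert R u0) x
                = (Ay ++ x :: (C ++ [z])) :: rowInsert (rowInsert R u0) y :=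
              ins_bump' (by simp) _ hAx (by omega)
            rw [e1, e2, f1, f2]
            simp
          | cons v C2 =>
            obtain ⟨hsplz, hC1z, hzv, hvC2, hvC⟩ := split_of_dropWhile hsC hzC hdz
            set C1 := C.takeWhile (· < z) with hC1def
            have hC1C : ∀ e ∈ C1, e ∈ C := fun e he => by rw [← hsplz]; simp [he]
            have hvR : v ∉ R.flatten := hdisj v (hCr v hvC)
            have hu0v : u0 < v := hu0C v hvC
            have e1 : rowInsert ((Ay ++ y :: C) :: rowInsert R u0) x
                = (Ay ++ x :: C) :: rowInsert (rowInsert R u0) y :=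
              ins_bump Ay C _ hAx (by omega)
            have e2 : rowInsert ((Ay ++ x :: C) :: rowInsert (rowInsert R u0) y) z
                = ((Ay ++ x :: C1) ++ z :: C2) :: rowInsert (rowInsert (rowInsert R u0) y) v :=
              ins_bump' (by rw [← hsplz]; simp) _
                (by
                  intro e he
                  rcases List.mem_append.1 he with h | h
                  · exact lt_trans (hAy e h) hyz
                  · rcases List.mem_cons.1 h with rfl | h
                    · omega
                    · exact hC1z e h) (by omega)
            have f1 : rowInsert ((Ay ++ y :: C) :: rowInsert R u0) z
                = ((Ay ++ y :: C1) ++ z :: C2) :: rowInsert (rowInsert R u0) v :=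
              ins_bump' (by rw [← hsplz]; simp) _
                (by
                  intro e he
                  rcases List.mem_append.1 he with h | h
                  · exact lt_trans (hAy e h) hyz
                  · rcases List.mem_cons.1 h with rfl | h
                    · omega
                    · exact hC1z e h) (by omega)
            have f2 : rowInsert (((Ay ++ y :: C1) ++ z :: C2) :: rowInsert (rowInsert R u0) v) x
                = (Ay ++ x :: (C1 ++ z :: C2)) :: rowInsert (rowInsert (rowInsert R u0) v) y :=
              ins_bump' (by simp) _ hAx (by omega)
            rw [e1, e2, f1, f2, (ihR y u0 v hyu0 hu0v hyR hu0R hvR).2]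
            simp
        | cons u1 A2 =>
          have hxAy : x ∉ Ay := fun h => hxr (hAyr x h)
          obtain ⟨hsplAy, hA1x, hxu1, hu1A2, hu1Ay⟩ := split_of_dropWhile hsAy hxAy hdx
          set A1 := Ay.takeWhile (· < x) with hA1def
          have hA1Ay : ∀ e ∈ A1, e ∈ Ay := fun e he => by rw [← hsplAy]; simp [he]
          have hA2Ay : ∀ e ∈ A2, e ∈ Ay := fun e he => by rw [← hsplAy]; simp [he]
          have hu1R : u1 ∉ R.flatten := hdisj u1 (hAyr u1 hu1Ay)
          have hu1y : u1 < y := hAy u1 hu1Ay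
          cases hdz : C.dropWhile (· < z) with
          | nil =>
            have hallC : ∀ e ∈ C, e < z := all_of_dropWhile_nil hdz
            have e1 : rowInsert ((Ay ++ y :: C) :: rowInsert R u0) x
                = (A1 ++ x :: (A2 ++ y :: C)) :: rowInsert (rowInsert R u0) u1 :=
              ins_bump' (by rw [← hsplAy]; simp) _ hA1x (by omega)
            have e2 : rowInsert ((A1 ++ x :: (A2 ++ y :: C)) :: rowInsert (rowInsert R u0) u1) z
                = ((A1 ++ x :: (A2 ++ y :: C)) ++ [z]) :: rowInsert (rowInsert R u0) u1 :=
              ins_app _ (by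
                intro e he
                rcases List.mem_append.1 he with h | h
                · exact lt_trans (hAy e (hA1Ay e h)) hyz
                · rcases List.mem_cons.1 h with rfl | h
                  · omega
                  · rcases List.mem_append.1 h with h2 | h2
                    · exact lt_trans (hAy e (hA2Ay e h2)) hyz
                    · rcases List.mem_cons.1 h2 with rfl | h2
                      · omega
                      · exact hallC e h2)
            have f1 : rowInsert ((Ay ++ y :: C) :: rowInsert R u0) z
                = ((Ay ++ y :: C) ++ [z]) :: rowInsert R u0 :=
              ins_app _ (by
                intro e he
                rcases List.mem_append.1 he with h | h
                · exact lt_trans (hAy e h) hyz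
                · rcases List.mem_cons.1 h with rfl | h
                  · omega
                  · exact hallC e h)
            have f2 : rowInsert (((Ay ++ y :: C) ++ [z]) :: rowInsert R u0) x
                = (A1 ++ x :: (A2 ++ y :: C ++ [z])) :: rowInsert (rowInsert R u0) u1 :=
              ins_bump' (by rw [← hsplAy]; simp) _ hA1x (by omega)
            rw [e1, e2, f1, f2]
            simp
          | cons v C2 =>
            obtain ⟨hsplz, hC1z, hzv, hvC2, hvC⟩ := split_of_dropWhile hsC hzC hdz
            set C1 := C.takeWhile (· < z) with hC1def
            have hC1C : ∀ e ∈ C1, e ∈ C := fun e he => by rw [← hsplz]; simp [he]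
            have hvR : v ∉ R.flatten := hdisj v (hCr v hvC)
            have hu0v : u0 < v := hu0C v hvC
            have hu1u0 : u1 < u0 := lt_trans hu1y hyu0
            have e1 : rowInsert ((Ay ++ y :: C) :: rowInsert R u0) x
                = (A1 ++ x :: (A2 ++ y :: C)) :: rowInsert (rowInsert R u0) u1 :=
              ins_bump' (by rw [← hsplAy]; simp) _ hA1x (by omega)
            have e2 : rowInsert ((A1 ++ x :: (A2 ++ y :: C)) :: rowInsert (rowInsert R u0) u1) z
                = ((A1 ++ x :: (A2 ++ y :: C1)) ++ z :: C2)
                    :: rowInsert (rowInsert (rowInsert R u0) u1) v :=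
              ins_bump' (by rw [← hsplz]; simp) _
                (by
                  intro e he
                  rcases List.mem_append.1 he with h | h
                  · exact lt_trans (hAy e (hA1Ay e h)) hyz
                  · rcases List.mem_cons.1 h with rfl | h
                    · omega
                    · rcases List.mem_append.1 h with h2 | h2
                      · exact lt_trans (hAy e (hA2Ay e h2)) hyz
                      · rcases List.mem_cons.1 h2 with rfl | h2
                        · omega
                        · exact hC1z e h2) (by omega)
            have f1 : rowInsert ((Ay ++ y :: C) :: rowInsert R u0) z
                = ((Ay ++ y :: C1) ++ z :: C2) :: rowInsert (rowInsert R u0) v :=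
              ins_bump' (by rw [← hsplz]; simp) _
                (by
                  intro e he
                  rcases List.mem_append.1 he with h | h
                  · exact lt_trans (hAy e h) hyz
                  · rcases List.mem_cons.1 h with rfl | h
                    · omega
                    · exact hC1z e h) (by omega)
            have f2 : rowInsert (((Ay ++ y :: C1) ++ z :: C2) :: rowInsert (rowInsert R u0) v) x
                = (A1 ++ x :: (A2 ++ y :: (C1 ++ z :: C2)))
                    :: rowInsert (rowInsert (rowInsert R u0) v) u1 :=
              ins_bump' (by rw [← hsplAy]; simp) _ hA1x (by omega)
            rw [e1, e2, f1, f2, (ihR u1 u0 v hu1u0 hu0v hu1R hu0R hvR).2]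
            simp

-- ######## Chunk F: invariance and final assembly ########

lemma RS_append (α β : List ℕ) : RS (α ++ β) = List.foldl rowInsert (RS α) β := by
  unfold RS; rw [List.foldl_append]

lemma RS_kstep {u v : List ℕ} (h : KStep u v) (hu : u.Nodup) : RS u = RS v := by
  cases h with
  | k1 α β h1 h2 =>
    rename_i x y z
    have hα : α.Nodup := (List.nodup_append.1 (by simpa using hu)).1
    have hrest := (List.nodup_append.1 (by simpa using hu)).2
    have hx : x ∉ α := fun hh => hrest.2 _ hh _ (by simp) rfl
    have hz : z ∉ α := fun hh => hrest.2 _ hh _ (by simp) rfl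
    have hy : y ∉ α := fun hh => hrest.2 _ hh _ (by simp) rfl
    have hrows := rowsOK_RS hα
    have hndf : (RS α).flatten.Nodup := (flatten_RS).nodup_iff.2 hα
    have hxf : x ∉ (RS α).flatten := fun hh => hx (flatten_RS.subset hh)
    have hyf : y ∉ (RS α).flatten := fun hh => hy (flatten_RS.subset hh)
    have hzf : z ∉ (RS α).flatten := fun hh => hz (flatten_RS.subset hh)
    have key := (triple (RS α) hrows hndf x y z h1 h2 hxf hyf hzf).1
    have e1 : α ++ x :: z :: y :: β = (α ++ [x, z, y]) ++ β := by simp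
    have e2 : α ++ z :: x :: y :: β = (α ++ [z, x, y]) ++ β := by simp
    rw [e1, e2, RS_append, RS_append, RS_append, RS_append]
    simp only [List.foldl_cons, List.foldl_nil]
    rw [key]
  | k2 α β h1 h2 =>
    rename_i x y z
    have hα : α.Nodup := (List.nodup_append.1 (by simpa using hu)).1
    have hrest := (List.nodup_append.1 (by simpa using hu)).2
    have hx : x ∉ α := fun hh => hrest.2 _ hh _ (by simp) rfl
    have hz : z ∉ α := fun hh => hrest.2 _ hh _ (by simp) rfl
    have hy : y ∉ α := fun hh => hrest.2 _ hh _ (by simp) rfl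
    have hrows := rowsOK_RS hα
    have hndf : (RS α).flatten.Nodup := (flatten_RS).nodup_iff.2 hα
    have hxf : x ∉ (RS α).flatten := fun hh => hx (flatten_RS.subset hh)
    have hyf : y ∉ (RS α).flatten := fun hh => hy (flatten_RS.subset hh)
    have hzf : z ∉ (RS α).flatten := fun hh => hz (flatten_RS.subset hh)
    have key := (triple (RS α) hrows hndf x y z h1 h2 hxf hyf hzf).2
    have e1 : α ++ y :: x :: z :: β = (α ++ [y, x, z]) ++ β := by simp
    have e2 : α ++ y :: z :: x :: β = (α ++ [y, z, x]) ++ β := by simp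
    rw [e1, e2, RS_append, RS_append, RS_append, RS_append]
    simp only [List.foldl_cons, List.foldl_nil]
    rw [key]

lemma RS_ke {u v : List ℕ} (h : KE u v) (hu : u.Nodup) : RS u = RS v := by
  induction h with
  | refl => rfl
  | @tail b c hub hbc ih =>
    have hb : b.Nodup := ((KE.perm hub).nodup_iff).1 hu
    rcases hbc with hbc | hbc
    · exact ih.trans (RS_kstep hbc hb)
    · have hc : c.Nodup := (hbc.perm.nodup_iff).2 hb
      exact ih.trans (RS_kstep hbc hc).symm

lemma eq_of_getD : ∀ {L M : List (List ℕ)}, L.length = M.length →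
    (∀ j, L.getD j [] = M.getD j []) → L = M := by
  intro L
  induction L with
  | nil =>
    intro M h _
    exact (List.eq_nil_of_length_eq_zero h.symm).symm
  | cons a L ih =>
    intro M hlen hg
    cases M with
    | nil => simp at hlen
    | cons b M' =>
      have h0 := hg 0
      simp only [List.getD_cons_zero] at h0
      subst h0
      have := ih (M := M') (by simpa using hlen) (fun j => by simpa using hg (j + 1))
      rw [this]

lemma rows_le_head {T : List (List ℕ)} (hstd : StdT T) :
    ∀ s ∈ T, s.length ≤ (T.headD []).length := by
  cases T with
  | nil => simp
  | cons t T' =>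
    intro s hs
    rcases List.mem_cons.1 hs with rfl | hs
    · simp
    · simpa using chain_len hstd.1 s hs

lemma len_zfold {T : List (List ℕ)} (hstd : StdT T) :
    (List.foldl zipApp [] T).length = (T.headD []).length := by
  induction T using List.reverseRecOn with
  | nil => simp
  | append_singleton X r ih =>
    rw [List.foldl_append]
    simp only [List.foldl_cons, List.foldl_nil]
    rw [zipApp_len, ih (std_prefix hstd)]
    cases X with
    | nil => simp
    | cons t X' =>
      have hr : r.length ≤ t.length := by
        have := rows_le_head hstd r (by simp)
        simpa using this
      simp only [List.cons_append, List.headD_cons]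
      omega

lemma filterMap_none {f : List ℕ → Option ℕ} : ∀ {T : List (List ℕ)},
    (∀ s ∈ T, f s = none) → T.filterMap f = [] := by
  intro T
  induction T with
  | nil => intro _; rfl
  | cons t T' ih =>
    intro h
    rw [List.filterMap_cons, h t (by simp)]
    exact ih (fun s hs => h s (by simp [hs]))

lemma colT_ge {T : List (List ℕ)} (hstd : StdT T) {j : ℕ}
    (hj : (T.headD []).length ≤ j) : colT T j = [] := by
  unfold colT
  refine filterMap_none ?_
  intro s hs
  exact List.getElem?_eq_none (le_trans (rows_le_head hstd s hs) hj)

lemma trans_eq_fold {T : List (List ℕ)} (hstd : StdT T) :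
    transposeT T = List.foldl zipApp [] T := by
  apply eq_of_getD
  · rw [len_zfold hstd]
    simp [transposeT]
  · intro j
    rw [zfold_getD]
    unfold transposeT
    by_cases h : j < (T.headD []).length
    · rw [List.getD_eq_getElem _ _ (by simpa using h)]
      simp
    · rw [List.getD_eq_default _ _ (by simpa using h), colT_ge hstd (not_lt.1 h)]

theorem RS_rev {l : List ℕ} (h : l.Nodup) : RS l.reverse = transposeT (RS l) := by
  have hke : KE l (rowW (RS l)) := ke_rowW_RS h
  have h1 : RS l.reverse = RS ((rowW (RS l)).reverse) :=
    RS_ke hke.rev (List.nodup_reverse.2 h)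
  rw [h1, RS_rowW_rev (std_RS h), trans_eq_fold (std_RS h)]

lemma inv_le {n : ℕ} (u : Equiv.Perm (Fin n)) : invCount u ≤ NP n := by
  apply Finset.card_le_card
  intro p hp
  simp only [Finset.mem_filter, Finset.mem_univ, true_and] at hp ⊢
  exact hp.1

lemma inv_add_rev {n : ℕ} (u : Equiv.Perm (Fin n)) :
    invCount (u * Fin.revPerm) + invCount u = NP n := by
  classical
  have h1 : invCount (u * Fin.revPerm)
      = (Finset.univ.filter (fun p : Fin n × Fin n => p.1 < p.2 ∧ u p.1 < u p.2)).card := by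
    unfold invCount
    refine Finset.card_bij' (fun p _ => (p.2.rev, p.1.rev)) (fun q _ => (q.2.rev, q.1.rev))
      ?_ ?_ ?_ ?_
    · intro p hp
      simp only [Finset.mem_filter, Finset.mem_univ, true_and, Equiv.Perm.mul_apply,
        Fin.revPerm_apply] at hp ⊢
      exact ⟨Fin.rev_lt_rev.2 hp.1, hp.2⟩
    · intro q hq
      simp only [Finset.mem_filter, Finset.mem_univ, true_and, Equiv.Perm.mul_apply,
        Fin.revPerm_apply, Fin.rev_rev] at hq ⊢
      exact ⟨Fin.rev_lt_rev.2 hq.1, hq.2⟩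
    · intro p _; simp [Fin.rev_rev]
    · intro q _; simp [Fin.rev_rev]
  have h2 : NP n = (Finset.univ.filter (fun p : Fin n × Fin n => p.1 < p.2 ∧ u p.1 < u p.2)).card
      + invCount u := by
    unfold NP invCount
    rw [← Finset.card_union_of_disjoint]
    · congr 1
      ext p
      simp only [Finset.mem_union, Finset.mem_filter, Finset.mem_univ, true_and]
      constructor
      · intro h
        rcases lt_or_gt_of_ne (fun he => absurd (u.injective he) (ne_of_lt h)) with h2 | h2
        · exact Or.inl ⟨h, h2⟩
        · exact Or.inr ⟨h, h2⟩
      · rintro (⟨h, _⟩ | ⟨h, _⟩) <;> exact h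
    · rw [Finset.disjoint_filter]
      rintro p _ ⟨_, h2⟩ ⟨_, h3⟩
      exact absurd h2 (asymm h3)
  omega

lemma inv_inv {n : ℕ} (x : Equiv.Perm (Fin n)) : invCount x⁻¹ = invCount x := by
  classical
  unfold invCount
  refine Finset.card_bij' (fun p _ => (x⁻¹ p.2, x⁻¹ p.1)) (fun q _ => (x q.2, x q.1)) ?_ ?_ ?_ ?_
  · intro p hp
    simp only [Finset.mem_filter, Finset.mem_univ, true_and] at hp ⊢
    exact ⟨hp.2, by simpa using hp.1⟩
  · intro q hq
    simp only [Finset.mem_filter, Finset.mem_univ, true_and] at hq ⊢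
    exact ⟨hq.2, by simpa using hq.1⟩
  · intro p _; simp
  · intro q _; simp

lemma inv_conj {n : ℕ} (x : Equiv.Perm (Fin n)) :
    invCount (Fin.revPerm * x * Fin.revPerm) = invCount x := by
  classical
  unfold invCount
  refine Finset.card_bij' (fun p _ => (p.2.rev, p.1.rev)) (fun q _ => (q.2.rev, q.1.rev))
    ?_ ?_ ?_ ?_
  · intro p hp
    simp only [Finset.mem_filter, Finset.mem_univ, true_and, Equiv.Perm.mul_apply,
      Fin.revPerm_apply, Fin.rev_lt_rev] at hp ⊢
    exact ⟨hp.1, hp.2⟩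
  · intro q hq
    simp only [Finset.mem_filter, Finset.mem_univ, true_and, Equiv.Perm.mul_apply,
      Fin.revPerm_apply, Fin.rev_lt_rev, Fin.rev_rev] at hq ⊢
    exact ⟨hq.1, hq.2⟩
  · intro p _; simp [Fin.rev_rev]
  · intro q _; simp [Fin.rev_rev]

lemma wordOf_mul_rev {n : ℕ} (u : Equiv.Perm (Fin n)) :
    wordOf (u * Fin.revPerm) = (wordOf u).reverse := by
  unfold wordOf
  rw [← List.map_reverse, List.finRange_reverse, List.map_map]
  rfl

lemma nodup_wordOf {n : ℕ} (u : Equiv.Perm (Fin n)) : (wordOf u).Nodup := by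
  unfold wordOf
  refine List.Nodup.map ?_ (List.nodup_finRange n)
  intro a b hab
  simp only [add_left_inj] at hab
  exact u.injective (Fin.val_injective hab)

end S7

/-- if `S ≤ T` in the induced Duflo order on standard Young tableaux,
then `S† ≥ T†`, i.e. `T† ≤ S†`, in the same order. -/
theorem stmt7 (n : ℕ) (S T : List (List ℕ)) (h : dufloLE n S T) :
    dufloLE n (transposeT T) (transposeT S) := by
  obtain ⟨w, y, ⟨x, hw, hlen⟩, hS, hT⟩ := h
  refine ⟨y * Fin.revPerm, w * Fin.revPerm, ⟨Fin.revPerm * x⁻¹ * Fin.revPerm, ?_, ?_⟩, ?_, ?_⟩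
  · ext i
    simp [hw, Equiv.Perm.mul_apply, Fin.rev_rev]
  · have h1 := S7.inv_add_rev w
    have h2 := S7.inv_add_rev y
    have h3 : invCount (Fin.revPerm * x⁻¹ * Fin.revPerm) = invCount x := by
      rw [S7.inv_conj, S7.inv_inv]
    have h4 := S7.inv_le w
    rw [h3, hlen] at *
    omega
  · rw [S7.wordOf_mul_rev, S7.RS_rev (S7.nodup_wordOf w), hT]
  · rw [S7.wordOf_mul_rev, S7.RS_rev (S7.nodup_wordOf y), hS]
end

section
/- For permutations w, y ∈ S_n with w ≤_D y in the right weak Bruhat order, and for any a ∈ {1,…,n+1}, one has [w̄_a, a] ≤_D [ȳ_a, a] in S_{n+1}, where w̄_a is obtained from the word of w by increasing all letters ≥ a by one and appending a. -/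
/-- `w̄_a`: increase every letter `≥ a` by one. -/
def barWord (a : ℕ) (l : List ℕ) : List ℕ := l.map (fun x => if x < a then x else x + 1)

/-- The right weak Bruhat order on words of permutations: `u ≤_D v` iff every
inversion of `u` (as a pair of values) is an inversion of `v`; the position of a
value `i` in the word `u` is `u.indexOf i`, i.e. `u⁻¹(i)`. -/
def wordLE (u v : List ℕ) : Prop :=
  ∀ i j : ℕ, i < j → u.idxOf j < u.idxOf i → v.idxOf j < v.idxOf i

open Finset

section DiscordantPairs

variable {α β : Type*} [Fintype α] [LinearOrder β]

def discordantPairs (f g : α → β) : Finset (α × α) :=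
  univ.filter fun p => f p.1 < f p.2 ∧ g p.2 < g p.1

@[simp]
theorem mem_discordantPairs {f g : α → β} {p : α × α} :
    p ∈ discordantPairs f g ↔ f p.1 < f p.2 ∧ g p.2 < g p.1 := by
  simp [discordantPairs]

theorem card_discordantPairs_comm (f g : α → β) :
    #(discordantPairs f g) = #(discordantPairs g f) :=
  card_equiv (Equiv.prodComm α α) fun _ => by simp [and_comm]

theorem card_discordantPairs_comp (e : α ≃ α) (f g : α → β) :
    #(discordantPairs (f ∘ e) (g ∘ e)) = #(discordantPairs f g) :=
  card_equiv (e.prodCongr e) fun _ => by simp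

theorem disjoint_discordantPairs (f g h : α → β) :
    Disjoint (discordantPairs f g) (discordantPairs g h) :=
  disjoint_left.2 fun _ hfg hgh =>
    lt_asymm (mem_discordantPairs.1 hfg).2 (mem_discordantPairs.1 hgh).1

theorem discordantPairs_subset_union [DecidableEq α] {g : α → β} (hg : Function.Injective g)
    (f h : α → β) : discordantPairs f h ⊆ discordantPairs f g ∪ discordantPairs g h := by
  rintro ⟨p, q⟩ hpq
  rw [mem_discordantPairs] at hpq
  have hne : g p ≠ g q := hg.ne fun e => hpq.1.ne (congrArg f e)
  rcases hne.lt_or_gt with hlt | hgt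
  · exact mem_union_right _ (mem_discordantPairs.2 ⟨hlt, hpq.2⟩)
  · exact mem_union_left _ (mem_discordantPairs.2 ⟨hpq.1, hgt⟩)

theorem discordantPairs_subset_of_card_eq_add [DecidableEq α] {f g h : α → β}
    (hg : Function.Injective g)
    (hcard : #(discordantPairs f h) = #(discordantPairs f g) + #(discordantPairs g h)) :
    discordantPairs f g ⊆ discordantPairs f h := by
  have heq := eq_of_subset_of_card_le (discordantPairs_subset_union hg f h) <| by
    rw [card_union_of_disjoint (disjoint_discordantPairs f g h), hcard]
  rw [heq]
  exact subset_union_left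

end DiscordantPairs

section WeakOrder

variable {n : ℕ}

theorem invCount_eq_card_discordantPairs (σ : Equiv.Perm (Fin n)) :
    invCount σ = #(discordantPairs id σ) :=
  rfl

theorem invCount_inv (σ : Equiv.Perm (Fin n)) : invCount σ⁻¹ = invCount σ := by
  rw [invCount_eq_card_discordantPairs, invCount_eq_card_discordantPairs,
    ← card_discordantPairs_comp σ, card_discordantPairs_comm]
  simp

theorem discordantPairs_inv_subset_of_weakLE {w y : Equiv.Perm (Fin n)} (h : weakLE w y) :
    discordantPairs id ⇑w⁻¹ ⊆ discordantPairs id ⇑y⁻¹ := by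
  obtain ⟨x, rfl, hlen⟩ := h
  have hcomp : ⇑(w * x)⁻¹ = ⇑x⁻¹ ∘ ⇑w⁻¹ := by rw [mul_inv_rev, Equiv.Perm.coe_mul]
  rw [hcomp]
  refine discordantPairs_subset_of_card_eq_add (w⁻¹).injective ?_
  calc #(discordantPairs id (⇑x⁻¹ ∘ ⇑w⁻¹)) = invCount (w * x)⁻¹ := by rw [← hcomp]; rfl
    _ = invCount w⁻¹ + invCount x⁻¹ := by rw [invCount_inv, invCount_inv, invCount_inv, hlen]
    _ = _ := congrArg (invCount w⁻¹ + ·)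
      (card_discordantPairs_comp (w⁻¹ : Equiv.Perm (Fin n)) id ⇑x⁻¹).symm

end WeakOrder

theorem List.idxOf_map_of_injective {α β : Type*} [DecidableEq α] [DecidableEq β] {f : α → β}
    (hf : Function.Injective f) (a : α) (l : List α) :
    (l.map f).idxOf (f a) = l.idxOf a := by
  induction l with
  | nil => rfl
  | cons b t ih =>
    by_cases hb : b = a
    · subst hb; simp
    · rw [List.map_cons, List.idxOf_cons_ne _ (hf.ne hb), List.idxOf_cons_ne _ hb, ih]

theorem wordLE_of_perm {u v : List ℕ} (huv : u.Perm v)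
    (h : ∀ i ∈ u, ∀ j ∈ u, i < j → u.idxOf j < u.idxOf i → v.idxOf j < v.idxOf i) :
    wordLE u v := by
  intro i j hij hji
  have hj : j ∈ u := List.idxOf_lt_length_iff.1 (hji.trans_le List.idxOf_le_length)
  by_cases hi : i ∈ u
  · exact h i hi j hj hij hji
  · rw [List.idxOf_of_notMem (mt huv.mem_iff.2 hi)]
    exact List.idxOf_lt_length_iff.2 (huv.mem_iff.1 hj)

theorem wordLE.map {u v : List ℕ} {f : ℕ → ℕ} (hf : StrictMono f) (huv : u.Perm v)
    (h : wordLE u v) : wordLE (u.map f) (v.map f) := by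
  refine wordLE_of_perm (huv.map f) ?_
  simp only [List.mem_map]
  rintro _ ⟨i, -, rfl⟩ _ ⟨j, -, rfl⟩ hij
  simp only [List.idxOf_map_of_injective hf.injective]
  exact h i j (hf.lt_iff_lt.1 hij)

theorem wordLE.append_singleton {u v : List ℕ} {c : ℕ} (huv : u.Perm v) (hc : c ∉ u)
    (h : wordLE u v) : wordLE (u ++ [c]) (v ++ [c]) := by
  have idxOf_last : ∀ l : List ℕ, c ∉ l → (l ++ [c]).idxOf c = l.length := fun l hl => by
    simp [List.idxOf_append_of_notMem hl]
  refine wordLE_of_perm (huv.append_right [c]) ?_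
  simp only [List.mem_append, List.mem_singleton]
  rintro i (hi | rfl) j (hj | rfl) hij hji
  · rw [List.idxOf_append_of_mem hi, List.idxOf_append_of_mem hj] at hji
    rw [List.idxOf_append_of_mem (huv.mem_iff.1 hi), List.idxOf_append_of_mem (huv.mem_iff.1 hj)]
    exact h i j hij hji
  · rw [idxOf_last u hc, List.idxOf_append_of_mem hi] at hji
    exact absurd hji List.idxOf_le_length.not_gt
  · rw [idxOf_last v (mt huv.mem_iff.2 hc), List.idxOf_append_of_mem (huv.mem_iff.1 hj)]
    exact List.idxOf_lt_length_iff.2 (huv.mem_iff.1 hj)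
  · exact absurd hij (lt_irrefl _)

theorem strictMono_barLetter (a : ℕ) : StrictMono fun x : ℕ => if x < a then x else x + 1 := by
  intro x y hxy
  dsimp only
  split_ifs <;> omega

theorem self_notMem_barWord (a : ℕ) (l : List ℕ) : a ∉ barWord a l := by
  simp only [barWord, List.mem_map, not_exists, not_and]
  intro x _
  split_ifs <;> omega

section WordOf

variable {n : ℕ}

theorem wordOf_perm (w y : Equiv.Perm (Fin n)) : (wordOf w).Perm (wordOf y) := by
  simpa only [wordOf, List.map_map, Function.comp_def] using
    (w.map_finRange_perm.trans y.map_finRange_perm.symm).map fun k : Fin n => (k : ℕ) + 1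

theorem mem_wordOf {w : Equiv.Perm (Fin n)} {i : ℕ} :
    i ∈ wordOf w ↔ ∃ m : Fin n, (m : ℕ) + 1 = i := by
  simp only [wordOf, List.mem_map, List.mem_finRange, true_and]
  exact (w.surjective.exists (p := fun m : Fin n => (m : ℕ) + 1 = i)).symm

theorem idxOf_wordOf (w : Equiv.Perm (Fin n)) (m : Fin n) :
    (wordOf w).idxOf ((m : ℕ) + 1) = w⁻¹ m := by
  have hinj : Function.Injective fun k : Fin n => (w k : ℕ) + 1 :=
    fun k l e => w.injective (Fin.ext (Nat.succ_injective e))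
  have hm : (m : ℕ) + 1 = (w (w⁻¹ m) : ℕ) + 1 := by simp
  rw [wordOf, hm, List.idxOf_map_of_injective hinj, List.idxOf_finRange]

theorem wordLE_wordOf_of_weakLE {w y : Equiv.Perm (Fin n)} (h : weakLE w y) :
    wordLE (wordOf w) (wordOf y) := by
  refine wordLE_of_perm (wordOf_perm w y) ?_
  rintro _ hi _ hj hij hji
  obtain ⟨p, rfl⟩ := mem_wordOf.1 hi
  obtain ⟨q, rfl⟩ := mem_wordOf.1 hj
  rw [idxOf_wordOf, idxOf_wordOf] at hji ⊢
  have hpq : (p, q) ∈ discordantPairs id ⇑w⁻¹ :=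
    mem_discordantPairs.2 ⟨Fin.lt_def.2 (Nat.succ_lt_succ_iff.1 hij), Fin.lt_def.2 hji⟩
  exact Fin.lt_def.1 (mem_discordantPairs.1 (discordantPairs_inv_subset_of_weakLE h hpq)).2

end WordOf

theorem stmt10_general (n : ℕ) (w y : Equiv.Perm (Fin n)) (h : weakLE w y)
    (a : ℕ) :
    wordLE (barWord a (wordOf w) ++ [a]) (barWord a (wordOf y) ++ [a]) :=
  ((wordLE_wordOf_of_weakLE h).map (strictMono_barLetter a) (wordOf_perm w y)).append_singleton
    ((wordOf_perm w y).map _) (self_notMem_barWord a _)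

/-- if `w ≤_D y` in the right weak Bruhat order on `S_n`, then
`[w̄_a, a] ≤_D [ȳ_a, a]` in `S_{n+1}`. -/
theorem stmt10 (n : ℕ) (w y : Equiv.Perm (Fin n)) (h : weakLE w y)
    (a : ℕ) (h1 : 1 ≤ a) (h2 : a ≤ n + 1) :
    wordLE (barWord a (wordOf w) ++ [a]) (barWord a (wordOf y) ++ [a]) :=
  stmt10_general n w y h a
end

section
/- Define τ(w) = {i : w⁻¹(i) > w⁻¹(i+1)} for w ∈ S_n, and for a standard Young tableau T define τ(T) = {i : the row of i+1 in T is strictly below the row of i}. Then for every w ∈ S_n, τ(P(w)) = τ(w), where P(w) is the Robinson–Schensted insertion tableau of w. -/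
/-- The (0-based) index of the row of a tableau containing the entry `a`. -/
def rowOf (T : List (List ℕ)) (a : ℕ) : ℕ := T.findIdx (fun r => r.contains a)

def RowsSorted (T : List (List ℕ)) : Prop := ∀ r ∈ T, r.Pairwise (· < ·)

lemma RowsSorted.cons_iff {r : List ℕ} {rs : List (List ℕ)} :
    RowsSorted (r :: rs) ↔ r.Pairwise (· < ·) ∧ RowsSorted rs := by
  simp [RowsSorted]

section Row

variable {r rest : List ℕ} {rs : List (List ℕ)} {a y : ℕ}

lemma rowOf_nil (b : ℕ) : rowOf [] b = 0 := rfl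

lemma rowOf_cons (b : ℕ) : rowOf (r :: rs) b = if b ∈ r then 0 else rowOf rs b + 1 := by
  simp [rowOf, List.findIdx_cons]

lemma rowInsert_cons_of_dropWhile_eq_nil (h : r.dropWhile (· < a) = []) :
    rowInsert (r :: rs) a = (r ++ [a]) :: rs := by
  simp [rowInsert, h]

lemma rowInsert_cons_of_dropWhile_eq_cons (h : r.dropWhile (· < a) = y :: rest) :
    rowInsert (r :: rs) a = (r.takeWhile (· < a) ++ a :: rest) :: rowInsert rs y := by
  simp [rowInsert, h]

lemma takeWhile_append_cons_of_dropWhile_eq_cons (h : r.dropWhile (· < a) = y :: rest) :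
    r.takeWhile (· < a) ++ y :: rest = r := by
  rw [← h, List.takeWhile_append_dropWhile]

lemma mem_of_dropWhile_eq_cons (h : r.dropWhile (· < a) = y :: rest) : y ∈ r := by
  rw [← takeWhile_append_cons_of_dropWhile_eq_cons h]; simp

lemma le_of_dropWhile_eq_cons (h : r.dropWhile (· < a) = y :: rest) : a ≤ y := by
  have := List.head?_dropWhile_not (· < a) r
  rw [h] at this
  simpa using this

lemma le_of_mem_of_dropWhile_eq_cons (hr : r.Pairwise (· < ·))
    (h : r.dropWhile (· < a) = y :: rest) {b : ℕ} (hb : b ∈ r) (hab : a ≤ b) : y ≤ b := by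
  rw [← takeWhile_append_cons_of_dropWhile_eq_cons h] at hb hr
  rcases List.mem_append.1 hb with hb | hb
  · have := List.mem_takeWhile_imp hb
    simp only [decide_eq_true_eq] at this
    omega
  · rcases List.mem_cons.1 hb with rfl | hb
    · exact le_rfl
    · exact (List.pairwise_cons.1 (List.pairwise_append.1 hr).2.1).1 b hb |>.le

lemma mem_takeWhile_append_cons_iff (hr : r.Pairwise (· < ·))
    (h : r.dropWhile (· < a) = y :: rest) {b : ℕ} : b ∈ r.takeWhile (· < a) ++ a :: rest ↔ b = a ∨ (b ∈ r ∧ b ≠ y) := by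
  have hnd : (r.takeWhile (· < a) ++ y :: rest).Nodup := by
    rw [takeWhile_append_cons_of_dropWhile_eq_cons h]; exact hr.imp ne_of_lt
  conv_rhs => rw [← takeWhile_append_cons_of_dropWhile_eq_cons h]
  simp only [List.nodup_append, List.nodup_cons] at hnd
  simp only [List.mem_append, List.mem_cons]
  grind

lemma pairwise_takeWhile_append_cons (hr : r.Pairwise (· < ·))
    (h : r.dropWhile (· < a) = y :: rest) :
    (r.takeWhile (· < a) ++ a :: rest).Pairwise (· < ·) := by
  have hr' := takeWhile_append_cons_of_dropWhile_eq_cons h ▸ hr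
  rw [List.pairwise_append, List.pairwise_cons] at hr' ⊢
  obtain ⟨ht, ⟨hy, hrest⟩, hcross⟩ := hr'
  have hay := le_of_dropWhile_eq_cons h
  refine ⟨ht, ⟨fun b hb => lt_of_le_of_lt hay (hy b hb), hrest⟩, fun b hb c hc => ?_⟩
  have hba : b < a := by simpa using List.mem_takeWhile_imp hb
  rcases List.mem_cons.1 hc with rfl | hc
  · exact hba
  · exact hba.trans (lt_of_le_of_lt hay (hy c hc))

end Row

lemma rowOf_rowInsert_self (T : List (List ℕ)) (a : ℕ) : rowOf (rowInsert T a) a = 0 := by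
  rcases T with _ | ⟨r, rs⟩
  · simp [rowInsert, rowOf_cons]
  · rcases hd : r.dropWhile (· < a) with _ | ⟨y, rest⟩
    · simp [rowInsert_cons_of_dropWhile_eq_nil hd, rowOf_cons]
    · simp [rowInsert_cons_of_dropWhile_eq_cons hd, rowOf_cons]

lemma rowsSorted_rowInsert {T : List (List ℕ)} (hT : RowsSorted T) (a : ℕ) :
    RowsSorted (rowInsert T a) := by
  induction T generalizing a with
  | nil => simp [rowInsert, RowsSorted]
  | cons r rs ih =>
    obtain ⟨hr, hrs⟩ := RowsSorted.cons_iff.1 hT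
    rcases hd : r.dropWhile (· < a) with _ | ⟨y, rest⟩
    · rw [rowInsert_cons_of_dropWhile_eq_nil hd, RowsSorted.cons_iff]
      refine ⟨List.pairwise_append.2 ⟨hr, by simp, fun b hb c hc => ?_⟩, hrs⟩
      rw [List.mem_singleton.1 hc]
      simpa using List.dropWhile_eq_nil_iff.1 hd b hb
    · rw [rowInsert_cons_of_dropWhile_eq_cons hd, RowsSorted.cons_iff]
      exact ⟨pairwise_takeWhile_append_cons hr hd, ih hrs y⟩

lemma flatten_rowInsert_perm (T : List (List ℕ)) (a : ℕ) :
    (rowInsert T a).flatten.Perm (a :: T.flatten) := by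
  induction T generalizing a with
  | nil => simp [rowInsert]
  | cons r rs ih =>
    rcases hd : r.dropWhile (· < a) with _ | ⟨y, rest⟩
    · rw [rowInsert_cons_of_dropWhile_eq_nil hd]
      simp
    · rw [rowInsert_cons_of_dropWhile_eq_cons hd, List.flatten_cons, List.flatten_cons]
      conv_rhs => rw [← takeWhile_append_cons_of_dropWhile_eq_cons hd]
      refine ((ih y).append_left _).trans ?_
      simp only [List.append_assoc, List.cons_append]
      exact List.perm_middle.trans ((List.perm_middle.append_left _).cons a)

lemma zero_lt_rowOf_rowInsert_succ {T : List (List ℕ)} (hT : RowsSorted T) {i : ℕ}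
    (hi : i ∉ T.flatten) : 0 < rowOf (rowInsert T i) (i + 1) := by
  rcases T with _ | ⟨r, rs⟩
  · simp [rowInsert, rowOf_cons]
  · have hr := (RowsSorted.cons_iff.1 hT).1
    have hir : i ∉ r := fun h => hi (List.mem_flatten.2 ⟨r, by simp, h⟩)
    rcases hd : r.dropWhile (· < i) with _ | ⟨y, rest⟩
    · have hi1 : i + 1 ∉ r := fun h => by simpa using List.dropWhile_eq_nil_iff.1 hd _ h
      simp [rowInsert_cons_of_dropWhile_eq_nil hd, rowOf_cons, hi1]
    · -- `i` bumps the least entry `≥ i` of the first row, which is `i + 1` if present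
      have hyi1 : i + 1 ∈ r → y = i + 1 := fun h => by
        have := le_of_mem_of_dropWhile_eq_cons hr hd h (by omega)
        have := le_of_dropWhile_eq_cons hd
        have : y ≠ i := fun hy => hir (hy ▸ mem_of_dropWhile_eq_cons hd)
        omega
      rw [rowInsert_cons_of_dropWhile_eq_cons hd, rowOf_cons]
      simp only [mem_takeWhile_append_cons_iff hr hd]
      grind

lemma rowOf_rowInsert_succ_le {T : List (List ℕ)} (hT : RowsSorted T) {i x : ℕ}
    (hxi : x ≠ i) (hxi1 : x ≠ i + 1) (h : rowOf T (i + 1) ≤ rowOf T i) :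
    rowOf (rowInsert T x) (i + 1) ≤ rowOf (rowInsert T x) i := by
  induction T generalizing x with
  | nil => simp [rowInsert, rowOf_cons, rowOf_nil, hxi.symm, hxi1.symm]
  | cons r rs ih =>
    obtain ⟨hr, hrs⟩ := RowsSorted.cons_iff.1 hT
    rcases hd : r.dropWhile (· < x) with _ | ⟨y, rest⟩
    · simpa [rowInsert_cons_of_dropWhile_eq_nil hd, rowOf_cons, hxi.symm, hxi1.symm] using h
    · have hy := mem_of_dropWhile_eq_cons hd
      rw [rowOf_cons, rowOf_cons] at h
      rw [rowInsert_cons_of_dropWhile_eq_cons hd, rowOf_cons, rowOf_cons]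
      simp only [mem_takeWhile_append_cons_iff hr hd]
      by_cases hi1 : i + 1 ∈ r
      · by_cases hi : i ∈ r
        · -- `i + 1` cannot be bumped past `i`, the smaller entry of the same row
          have hyi1 : i + 1 ≠ y := fun hy => by
            have := le_of_dropWhile_eq_cons hd
            have := le_of_mem_of_dropWhile_eq_cons hr hd hi (by omega)
            omega
          simp [hi1, hyi1]
        · by_cases hyi1 : i + 1 = y
          · simp [hi, hxi.symm, hxi1.symm, ← hyi1, rowOf_rowInsert_self]
          · simp [hi1, hyi1]
      · have hi : i ∉ r := fun hi => by simp [hi, hi1] at h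
        have hyi : y ≠ i := fun h => hi (h ▸ hy)
        have hyi1 : y ≠ i + 1 := fun h => hi1 (h ▸ hy)
        simp only [hi, hi1, if_false] at h
        simpa [hi, hi1, hxi.symm, hxi1.symm] using ih hrs hyi hyi1 (by omega)

lemma rowOf_rowInsert_lt_succ {T : List (List ℕ)} (hT : RowsSorted T) (hnd : T.flatten.Nodup)
    {i x : ℕ} (hxi : x ≠ i) (hxi1 : x ≠ i + 1) (h : rowOf T i < rowOf T (i + 1)) :
    rowOf (rowInsert T x) i < rowOf (rowInsert T x) (i + 1) := by
  induction T generalizing x with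
  | nil => simp [rowOf_nil] at h
  | cons r rs ih =>
    obtain ⟨hr, hrs⟩ := RowsSorted.cons_iff.1 hT
    rw [List.flatten_cons, List.nodup_append] at hnd
    rcases hd : r.dropWhile (· < x) with _ | ⟨y, rest⟩
    · simpa [rowInsert_cons_of_dropWhile_eq_nil hd, rowOf_cons, hxi.symm, hxi1.symm] using h
    · have hy := mem_of_dropWhile_eq_cons hd
      rw [rowOf_cons, rowOf_cons] at h
      have hi1 : i + 1 ∉ r := fun hi1 => by simp [hi1] at h
      rw [rowInsert_cons_of_dropWhile_eq_cons hd, rowOf_cons, rowOf_cons]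
      simp only [mem_takeWhile_append_cons_iff hr hd]
      by_cases hi : i ∈ r
      · by_cases hyi : y = i
        · subst hyi
          have hirs : y ∉ rs.flatten := fun h' => hnd.2.2 y hi y h' rfl
          have := zero_lt_rowOf_rowInsert_succ hrs hirs
          simp [hi1, hxi.symm, hxi1.symm, rowOf_rowInsert_self, this]
        · simp [hi, hi1, Ne.symm hyi, hxi1.symm]
      · have hyi : y ≠ i := fun h => hi (h ▸ hy)
        have hyi1 : y ≠ i + 1 := fun h => hi1 (h ▸ hy)
        simp only [hi, hi1, if_false] at h
        simpa [hi, hi1, hxi.symm, hxi1.symm] using ih hrs hnd.2.1 hyi hyi1 (by omega)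

lemma flatten_foldl_rowInsert_perm (l : List ℕ) (T : List (List ℕ)) :
    (l.foldl rowInsert T).flatten.Perm (T.flatten ++ l) := by
  induction l generalizing T with
  | nil => simp
  | cons x l ih =>
    exact (ih _).trans (((flatten_rowInsert_perm T x).append_right l).trans List.perm_middle.symm)

lemma rowsSorted_foldl_rowInsert (l : List ℕ) {T : List (List ℕ)} (hT : RowsSorted T) :
    RowsSorted (l.foldl rowInsert T) := by
  induction l generalizing T with
  | nil => exact hT
  | cons x l ih => exact ih (rowsSorted_rowInsert hT x)

lemma foldl_rowInsert_induction (P : List (List ℕ) → Prop) {l : List ℕ}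
    (step : ∀ T x, x ∈ l → RowsSorted T → T.flatten.Nodup → P T → P (rowInsert T x))
    {T : List (List ℕ)} (hT : RowsSorted T) (hnd : (T.flatten ++ l).Nodup) (h : P T) :
    P (l.foldl rowInsert T) := by
  induction l generalizing T with
  | nil => exact h
  | cons x l ih =>
    have hperm : ((rowInsert T x).flatten ++ l).Perm (T.flatten ++ x :: l) :=
      ((flatten_rowInsert_perm T x).append_right l).trans List.perm_middle.symm
    exact ih (fun T y hy => step T y (List.mem_cons_of_mem x hy)) (rowsSorted_rowInsert hT x)
      (hperm.nodup_iff.2 hnd) (step T x List.mem_cons_self hT (List.nodup_append.1 hnd).1 h)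

lemma rowsSorted_RS (u : List ℕ) : RowsSorted (RS u) :=
  rowsSorted_foldl_rowInsert u (by simp [RowsSorted])

lemma flatten_RS_perm (u : List ℕ) : (RS u).flatten.Perm u := by
  simpa [RS] using flatten_foldl_rowInsert_perm u []

lemma RS_append_cons_induction (P : List (List ℕ) → Prop) {u u' : List ℕ} {y : ℕ}
    (hA : (u ++ y :: u').Nodup) (hy : P (rowInsert (RS u) y))
    (step : ∀ T x, x ∈ u' → RowsSorted T → T.flatten.Nodup → P T → P (rowInsert T x)) :
    P (RS (u ++ y :: u')) := by
  have hperm : ((rowInsert (RS u) y).flatten ++ u').Perm (u ++ y :: u') :=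
    (((flatten_rowInsert_perm _ y).trans ((flatten_RS_perm u).cons y)).append_right u').trans
      List.perm_middle.symm
  rw [RS, List.foldl_append, List.foldl_cons]
  exact foldl_rowInsert_induction P step (rowsSorted_rowInsert (rowsSorted_RS u) y)
    (hperm.nodup_iff.2 hA) hy

lemma rowOf_RS_succ_le {u u' : List ℕ} {i : ℕ} (hA : (u ++ (i + 1) :: u').Nodup)
    (hi : i ∈ u) :
    rowOf (RS (u ++ (i + 1) :: u')) (i + 1) ≤ rowOf (RS (u ++ (i + 1) :: u')) i := by
  obtain ⟨-, hsuffix, hdisj⟩ := List.nodup_append.1 hA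
  refine RS_append_cons_induction (fun T => rowOf T (i + 1) ≤ rowOf T i) hA
    (by simp [rowOf_rowInsert_self]) fun T x hx hT _ h => rowOf_rowInsert_succ_le hT ?_ ?_ h
  · exact (hdisj i hi x (List.mem_cons_of_mem _ hx)).symm
  · exact fun hx1 => (List.nodup_cons.1 hsuffix).1 (hx1 ▸ hx)

lemma rowOf_RS_lt_succ {u u' : List ℕ} {i : ℕ} (hA : (u ++ i :: u').Nodup) (hi1 : i + 1 ∈ u) :
    rowOf (RS (u ++ i :: u')) i < rowOf (RS (u ++ i :: u')) (i + 1) := by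
  obtain ⟨-, hsuffix, hdisj⟩ := List.nodup_append.1 hA
  have hiu : i ∉ (RS u).flatten := fun h =>
    hdisj i ((flatten_RS_perm u).mem_iff.1 h) i List.mem_cons_self rfl
  refine RS_append_cons_induction (fun T => rowOf T i < rowOf T (i + 1)) hA
    (by simpa [rowOf_rowInsert_self] using zero_lt_rowOf_rowInsert_succ (rowsSorted_RS u) hiu)
    fun T x hx hT hnd h => rowOf_rowInsert_lt_succ hT hnd ?_ ?_ h
  · exact fun hxi => (List.nodup_cons.1 hsuffix).1 (hxi ▸ hx)
  · exact (hdisj (i + 1) hi1 x (List.mem_cons_of_mem _ hx)).symm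

lemma exists_eq_append_cons_of_idxOf_lt {A : List ℕ} {x y : ℕ} (hx : x ∈ A) (hy : y ∈ A)
    (h : A.idxOf x < A.idxOf y) : ∃ u u', A = u ++ y :: u' ∧ x ∈ u := by
  have hlt : A.idxOf y < A.length := List.idxOf_lt_length_iff.2 hy
  refine ⟨A.take (A.idxOf y), A.drop (A.idxOf y + 1), ?_, (List.mem_take_iff_idxOf_lt hx).2 h⟩
  conv_lhs => rw [← List.take_append_drop (A.idxOf y) A]
  rw [List.drop_eq_getElem_cons hlt, List.getElem_idxOf hlt]

lemma nodup_wordOf {n : ℕ} (w : Equiv.Perm (Fin n)) : (wordOf w).Nodup :=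
  (List.nodup_finRange n).map fun a b h => w.injective (Fin.val_injective (by simpa using h))

lemma mem_wordOf_s11 {n : ℕ} (w : Equiv.Perm (Fin n)) {b : ℕ} (h1 : 1 ≤ b) (h2 : b ≤ n) :
    b ∈ wordOf w := by
  refine List.mem_map.2 ⟨w⁻¹ ⟨b - 1, by omega⟩, List.mem_finRange _, ?_⟩
  simp only [Equiv.Perm.inv_def, Equiv.apply_symm_apply]
  omega

/-- `τ(P(w)) = τ(w)`: for `1 ≤ i ≤ n−1`, the entry `i+1` lies in a
strictly lower row of `P(w)` than `i` iff the position of `i` in the word of `w`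
is after the position of `i+1` (i.e. `w⁻¹(i) > w⁻¹(i+1)`). -/
theorem stmt11 (n : ℕ) (w : Equiv.Perm (Fin n)) (i : ℕ) (h1 : 1 ≤ i) (h2 : i + 1 ≤ n) :
    rowOf (RS (wordOf w)) i < rowOf (RS (wordOf w)) (i + 1) ↔
      (wordOf w).idxOf (i + 1) < (wordOf w).idxOf i := by
  have hA := nodup_wordOf w
  have hi := mem_wordOf_s11 w h1 (by omega)
  have hi1 := mem_wordOf_s11 w (by omega) h2
  have hne : (wordOf w).idxOf i ≠ (wordOf w).idxOf (i + 1) := by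
    simp [List.idxOf_inj hi]
  rcases hne.lt_or_gt with h | h
  · obtain ⟨u, u', hsplit, hu⟩ := exists_eq_append_cons_of_idxOf_lt hi hi1 h
    have := rowOf_RS_succ_le (hsplit ▸ hA) hu
    rw [← hsplit] at this
    omega
  · obtain ⟨u, u', hsplit, hu⟩ := exists_eq_append_cons_of_idxOf_lt hi1 hi h
    have := rowOf_RS_lt_succ (hsplit ▸ hA) hu
    rw [← hsplit] at this
    omega
end

section
/- Define on S_n: w ∈ D_{α_i, α_{i+1}} iff w⁻¹(i) < w⁻¹(i+1) and w⁻¹(i+1) > w⁻¹(i+2). For w ∈ D_{α_i,α_{i+1}}, define T(w) = s_i·w if α_{i+1} ∉ τ(s_i w), else T(w) = s_{i+1}·w, where τ(y) = {j : y⁻¹(j) > y⁻¹(j+1)}. Then T(w) ∈ D_{α_{i+1}, α_i} (i.e., T(w)⁻¹(i) > T(w)⁻¹(i+1) and T(w)⁻¹(i+1) < T(w)⁻¹(i+2)), and applying the analogous operator T' : D_{α_{i+1},α_i} → D_{α_i,α_{i+1}} gives T'(T(w)) = w. -/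
/-!
Write `a, b, c` for the positions `w⁻¹(i), w⁻¹(i+1), w⁻¹(i+2)`, so that `w ∈ D_{α,β}` means
`a < b` and `c < b`. Left multiplication by `s_α` (resp. `s_β`) swaps `a, b` (resp. `b, c`) in this
triple. If `c < a`, then `T(w) = s_β w` has triple `(a, c, b)`; otherwise `T(w) = s_α w` has triple
`(b, a, c)`. Both lie in `D_{β,α}`, and in each case `T'` applies the same reflection again.
-/

/-- The simple transposition `s_α` swapping the values `i` and `i+1` (0-based). -/
def sA (n i : ℕ) (h : i + 2 < n) : Equiv.Perm (Fin n) :=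
  Equiv.swap ⟨i, by omega⟩ ⟨i + 1, by omega⟩

/-- The simple transposition `s_β` swapping the values `i+1` and `i+2` (0-based). -/
def sB (n i : ℕ) (h : i + 2 < n) : Equiv.Perm (Fin n) :=
  Equiv.swap ⟨i + 1, by omega⟩ ⟨i + 2, h⟩

/-- `w ∈ D_{α,β}`: `α ∉ τ(w)` and `β ∈ τ(w)`, i.e.
`w⁻¹(i) < w⁻¹(i+1)` and `w⁻¹(i+1) > w⁻¹(i+2)` (0-based values). -/
def inDAB (n i : ℕ) (h : i + 2 < n) (w : Equiv.Perm (Fin n)) : Prop :=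
  w⁻¹ ⟨i, by omega⟩ < w⁻¹ ⟨i + 1, by omega⟩ ∧ w⁻¹ ⟨i + 2, h⟩ < w⁻¹ ⟨i + 1, by omega⟩

/-- `w ∈ D_{β,α}`: `w⁻¹(i) > w⁻¹(i+1)` and `w⁻¹(i+1) < w⁻¹(i+2)`. -/
def inDBA (n i : ℕ) (h : i + 2 < n) (w : Equiv.Perm (Fin n)) : Prop :=
  w⁻¹ ⟨i + 1, by omega⟩ < w⁻¹ ⟨i, by omega⟩ ∧ w⁻¹ ⟨i + 1, by omega⟩ < w⁻¹ ⟨i + 2, h⟩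

/-- Vogan's operator `T_{α,β}`: `T(w) = s_α·w` if `β ∉ τ(s_α·w)`, else `s_β·w`. -/
def vTAB (n i : ℕ) (h : i + 2 < n) (w : Equiv.Perm (Fin n)) : Equiv.Perm (Fin n) :=
  if (sA n i h * w)⁻¹ ⟨i + 2, h⟩ < (sA n i h * w)⁻¹ ⟨i + 1, by omega⟩ then
    sB n i h * w
  else sA n i h * w

/-- Vogan's operator `T_{β,α}`: `T'(y) = s_β·y` if `α ∉ τ(s_β·y)`, else `s_α·y`. -/
def vTBA (n i : ℕ) (h : i + 2 < n) (w : Equiv.Perm (Fin n)) : Equiv.Perm (Fin n) :=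
  if (sB n i h * w)⁻¹ ⟨i + 1, by omega⟩ < (sB n i h * w)⁻¹ ⟨i, by omega⟩ then
    sA n i h * w
  else sB n i h * w

open Equiv

namespace VoganT

variable {n i : ℕ} (h : i + 2 < n) (w : Perm (Fin n))

theorem swap_mul_inv_apply {α : Type*} [DecidableEq α] (x y z : α) (σ : Perm α) :
    (swap x y * σ)⁻¹ z = σ⁻¹ (swap x y z) := by
  rw [mul_inv_rev, swap_inv, Perm.mul_apply]

theorem sA_mul_inv_apply_left : (sA n i h * w)⁻¹ ⟨i, by omega⟩ = w⁻¹ ⟨i + 1, by omega⟩ := by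
  rw [sA, swap_mul_inv_apply, swap_apply_left]

theorem sA_mul_inv_apply_right : (sA n i h * w)⁻¹ ⟨i + 1, by omega⟩ = w⁻¹ ⟨i, by omega⟩ := by
  rw [sA, swap_mul_inv_apply, swap_apply_right]

theorem sA_mul_inv_apply_fixed : (sA n i h * w)⁻¹ ⟨i + 2, h⟩ = w⁻¹ ⟨i + 2, h⟩ := by
  rw [sA, swap_mul_inv_apply, swap_apply_of_ne_of_ne] <;> simp [Fin.ext_iff]

theorem sB_mul_inv_apply_left : (sB n i h * w)⁻¹ ⟨i + 1, by omega⟩ = w⁻¹ ⟨i + 2, h⟩ := by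
  rw [sB, swap_mul_inv_apply, swap_apply_left]

theorem sB_mul_inv_apply_right : (sB n i h * w)⁻¹ ⟨i + 2, h⟩ = w⁻¹ ⟨i + 1, by omega⟩ := by
  rw [sB, swap_mul_inv_apply, swap_apply_right]

theorem sB_mul_inv_apply_fixed : (sB n i h * w)⁻¹ ⟨i, by omega⟩ = w⁻¹ ⟨i, by omega⟩ := by
  rw [sB, swap_mul_inv_apply, swap_apply_of_ne_of_ne] <;> simp [Fin.ext_iff]

theorem sA_mul_sA_mul : sA n i h * (sA n i h * w) = w := by
  rw [sA, ← mul_assoc, swap_mul_self, one_mul]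

theorem sB_mul_sB_mul : sB n i h * (sB n i h * w) = w := by
  rw [sB, ← mul_assoc, swap_mul_self, one_mul]

theorem vTAB_eq_sB_mul (hca : w⁻¹ ⟨i + 2, h⟩ < w⁻¹ ⟨i, by omega⟩) :
    vTAB n i h w = sB n i h * w :=
  if_pos (by rwa [sA_mul_inv_apply_fixed, sA_mul_inv_apply_right])

theorem vTAB_eq_sA_mul (hac : w⁻¹ ⟨i, by omega⟩ < w⁻¹ ⟨i + 2, h⟩) :
    vTAB n i h w = sA n i h * w :=
  if_neg (by rw [sA_mul_inv_apply_fixed, sA_mul_inv_apply_right]; exact hac.asymm)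

theorem inDBA_sB_mul (hca : w⁻¹ ⟨i + 2, h⟩ < w⁻¹ ⟨i, by omega⟩)
    (hcb : w⁻¹ ⟨i + 2, h⟩ < w⁻¹ ⟨i + 1, by omega⟩) : inDBA n i h (sB n i h * w) := by
  rw [inDBA, sB_mul_inv_apply_left, sB_mul_inv_apply_fixed, sB_mul_inv_apply_right]
  exact ⟨hca, hcb⟩

theorem inDBA_sA_mul (hab : w⁻¹ ⟨i, by omega⟩ < w⁻¹ ⟨i + 1, by omega⟩)
    (hac : w⁻¹ ⟨i, by omega⟩ < w⁻¹ ⟨i + 2, h⟩) : inDBA n i h (sA n i h * w) := by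
  rw [inDBA, sA_mul_inv_apply_left, sA_mul_inv_apply_right, sA_mul_inv_apply_fixed]
  exact ⟨hab, hac⟩

theorem vTBA_sB_mul (hab : w⁻¹ ⟨i, by omega⟩ < w⁻¹ ⟨i + 1, by omega⟩) :
    vTBA n i h (sB n i h * w) = w := by
  rw [vTBA, sB_mul_sB_mul, if_neg hab.asymm]

theorem vTBA_sA_mul (hcb : w⁻¹ ⟨i + 2, h⟩ < w⁻¹ ⟨i + 1, by omega⟩) :
    vTBA n i h (sA n i h * w) = w := by
  rw [vTBA, sB_mul_inv_apply_left, sB_mul_inv_apply_fixed, sA_mul_inv_apply_fixed,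
    sA_mul_inv_apply_left, if_pos hcb, sA_mul_sA_mul]

end VoganT

open VoganT in
/-- for `w ∈ D_{αᵢ,α_{i+1}}`, Vogan's operator lands in
`D_{α_{i+1},αᵢ}` and the operator in the opposite direction is inverse to it. -/
theorem stmt18 (n i : ℕ) (h : i + 2 < n) (w : Equiv.Perm (Fin n))
    (hw : inDAB n i h w) :
    inDBA n i h (vTAB n i h w) ∧ vTBA n i h (vTAB n i h w) = w := by
  obtain ⟨hab, hcb⟩ := hw
  have hca_ne : w⁻¹ ⟨i + 2, h⟩ ≠ w⁻¹ ⟨i, by omega⟩ := by simp [Fin.ext_iff]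
  rcases hca_ne.lt_or_gt with hca | hac
  · rw [vTAB_eq_sB_mul h w hca]
    exact ⟨inDBA_sB_mul h w hca hcb, vTBA_sB_mul h w hab⟩
  · rw [vTAB_eq_sA_mul h w hac]
    exact ⟨inDBA_sA_mul h w hab hac, vTBA_sA_mul h w hcb⟩
end

section
/- Let w ∈ S_n with w ∈ D_{α_i, α_{i+1}} (i.e., w⁻¹(i) < w⁻¹(i+1) > w⁻¹(i+2), reading τ as in context). Then in the word form of w, the subword on letters {i, i+1, i+2} is either [i, i+2, i+1] or [i+2, i, i+1], and Vogan's operator T_{α_i,α_{i+1}} acts by: if the subword is [i, i+2, i+1] the result replaces it by [i+1, i+2, i]; if it is [i+2, i, i+1] the result replaces it by [i+1, i, i+2] (all other letters unchanged). -/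
lemma filt1 (n a : ℕ) (ha : a < n) :
    (List.range n).filter (fun k => decide (k = a)) = [a] := by
  induction n with
  | zero => omega
  | succ m ih =>
    rw [List.range_succ, List.filter_append]
    rcases eq_or_lt_of_le (Nat.lt_succ_iff.mp ha) with hm | hm
    · subst hm
      rw [List.filter_eq_nil_iff.mpr]
      · simp
      · intro k hk
        simp only [List.mem_range] at hk
        simp; omega
    · rw [ih hm]
      have : ¬(m = a) := by omega
      simp [this]

lemma filt2 (n a b : ℕ) (hab : a < b) (hb : b < n) :
    (List.range n).filter (fun k => decide (k = a ∨ k = b)) = [a, b] := by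
  induction n with
  | zero => omega
  | succ m ih =>
    rw [List.range_succ, List.filter_append]
    rcases eq_or_lt_of_le (Nat.lt_succ_iff.mp hb) with hm | hm
    · subst hm
      rw [List.filter_congr (q := fun k => decide (k = a)), filt1 b a hab]
      · simp
      · intro k hk
        simp only [List.mem_range] at hk
        simp only [decide_eq_decide]
        omega
    · rw [ih hm]
      have h1 : ¬(m = a ∨ m = b) := by omega
      simp [h1]

lemma filt3 (n a b c : ℕ) (hab : a < b) (hbc : b < c) (hc : c < n) :
    (List.range n).filter (fun k => decide (k = a ∨ k = b ∨ k = c)) = [a, b, c] := by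
  induction n with
  | zero => omega
  | succ m ih =>
    rw [List.range_succ, List.filter_append]
    rcases eq_or_lt_of_le (Nat.lt_succ_iff.mp hc) with hm | hm
    · subst hm
      rw [List.filter_congr (q := fun k => decide (k = a ∨ k = b)), filt2 c a b hab hbc]
      · simp
      · intro k hk
        simp only [List.mem_range] at hk
        simp only [decide_eq_decide]
        omega
    · rw [ih hm]
      have h1 : ¬(m = a ∨ m = b ∨ m = c) := by omega
      simp [h1]

lemma filt3_fin (n : ℕ) (a b c : Fin n) (hab : a < b) (hbc : b < c) :
    (List.finRange n).filter (fun k => decide (k = a ∨ k = b ∨ k = c)) = [a, b, c] := by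
  apply List.map_injective_iff.mpr Fin.val_injective
  have hcg : (List.finRange n).filter (fun k => decide (k = a ∨ k = b ∨ k = c))
      = (List.finRange n).filter ((fun m : ℕ => decide (m = (a : ℕ) ∨ m = (b : ℕ) ∨ m = (c : ℕ))) ∘ Fin.val) := by
    apply List.filter_congr
    intro k _
    simp only [Function.comp, decide_eq_decide, Fin.ext_iff]
  rw [hcg, ← List.filter_map, (show List.map Fin.val (List.finRange n) = List.range n from
      List.ext_getElem (by simp) (by simp)),
    filt3 n (a : ℕ) (b : ℕ) (c : ℕ) hab hbc c.isLt]
  simp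

lemma wordOf_swap (n : ℕ) (a b : Fin n) (hab : a ≠ b) (w : Equiv.Perm (Fin n)) :
    wordOf (Equiv.swap a b * w) = (wordOf w).map
      (fun m => if m = (a : ℕ) + 1 then (b : ℕ) + 1
        else if m = (b : ℕ) + 1 then (a : ℕ) + 1 else m) := by
  unfold wordOf
  rw [List.map_map]
  apply List.map_congr_left
  intro k _
  simp only [Function.comp, Equiv.Perm.mul_apply]
  rcases eq_or_ne (w k) a with h1 | h1
  · simp [h1, Equiv.swap_apply_left]
  · rcases eq_or_ne (w k) b with h2 | h2
    · have : (b : ℕ) ≠ (a : ℕ) := fun hh => hab (Fin.val_injective hh).symm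
      simp [h2, Equiv.swap_apply_right, this]
    · have h1' : (w k : ℕ) ≠ (a : ℕ) := fun hh => h1 (Fin.val_injective hh)
      have h2' : (w k : ℕ) ≠ (b : ℕ) := fun hh => h2 (Fin.val_injective hh)
      simp [Equiv.swap_apply_of_ne_of_ne h1 h2, h1', h2']

set_option maxHeartbeats 4000000 in
/-- for `w ∈ D_{αᵢ,α_{i+1}}` (letters `i+1, i+2, i+3` in the 1-based
word of `w`, corresponding to the 0-based values `i, i+1, i+2`), the subword of
the word of `w` on these three letters is `[i+1, i+3, i+2]` or `[i+3, i+1, i+2]`,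
and Vogan's operator acts by replacing it by `[i+2, i+3, i+1]` resp.
`[i+2, i+1, i+3]`, leaving all other letters unchanged. -/
theorem stmt19 (n i : ℕ) (h : i + 2 < n) (w : Equiv.Perm (Fin n))
    (hw : inDAB n i h w) :
    ((wordOf w).filter (fun a => decide (a = i + 1 ∨ a = i + 2 ∨ a = i + 3)) =
        [i + 1, i + 3, i + 2] ∨
      (wordOf w).filter (fun a => decide (a = i + 1 ∨ a = i + 2 ∨ a = i + 3)) =
        [i + 3, i + 1, i + 2]) ∧
    wordOf (vTAB n i h w) =
      (if (wordOf w).filter (fun a => decide (a = i + 1 ∨ a = i + 2 ∨ a = i + 3)) =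
          [i + 1, i + 3, i + 2] then
        (wordOf w).map (fun a => if a = i + 1 then i + 2 else if a = i + 2 then i + 1 else a)
      else
        (wordOf w).map (fun a => if a = i + 2 then i + 3 else if a = i + 3 then i + 2 else a)) := by
  obtain ⟨p, hp⟩ : ∃ p, p = w⁻¹ (⟨i, by omega⟩ : Fin n) := ⟨_, rfl⟩
  obtain ⟨q, hq⟩ : ∃ q, q = w⁻¹ (⟨i + 1, by omega⟩ : Fin n) := ⟨_, rfl⟩
  obtain ⟨r, hr⟩ : ∃ r, r = w⁻¹ (⟨i + 2, h⟩ : Fin n) := ⟨_, rfl⟩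
  obtain ⟨hpq, hrq⟩ := hw
  rw [← hp, ← hq] at hpq
  rw [← hr, ← hq] at hrq
  have ep : w p = ⟨i, by omega⟩ := by rw [hp]; exact Equiv.apply_symm_apply w _
  have eq' : w q = ⟨i + 1, by omega⟩ := by rw [hq]; exact Equiv.apply_symm_apply w _
  have er : w r = ⟨i + 2, h⟩ := by rw [hr]; exact Equiv.apply_symm_apply w _
  have hne : p ≠ r := by
    intro e
    have : w p = w r := congrArg w e
    rw [ep, er] at this
    exact absurd (congrArg Fin.val this) (by simp)
  have hword : (wordOf w).filter (fun a => decide (a = i + 1 ∨ a = i + 2 ∨ a = i + 3)) =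
      ((List.finRange n).filter (fun k => decide (k = p ∨ k = q ∨ k = r))).map
        (fun k => ((w k : ℕ) + 1)) := by
    unfold wordOf
    rw [List.filter_map]
    congr 1
    apply List.filter_congr
    intro k _
    simp only [Function.comp, decide_eq_decide]
    have e1 : (k = p) ↔ ((w k : ℕ) = i) := by
      rw [hp, Equiv.Perm.eq_inv_iff_eq, Fin.ext_iff]
    have e2 : (k = q) ↔ ((w k : ℕ) = i + 1) := by
      rw [hq, Equiv.Perm.eq_inv_iff_eq, Fin.ext_iff]
    have e3 : (k = r) ↔ ((w k : ℕ) = i + 2) := by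
      rw [hr, Equiv.Perm.eq_inv_iff_eq, Fin.ext_iff]
    rw [e1, e2, e3]
    omega
  have hsa2 : (sA n i h * w)⁻¹ ⟨i + 2, h⟩ = r := by
    simp only [sA, mul_inv_rev, Equiv.Perm.mul_apply, Equiv.swap_inv]
    rw [Equiv.swap_apply_of_ne_of_ne (Fin.ne_of_val_ne (show i + 2 ≠ i by omega))
      (Fin.ne_of_val_ne (show i + 2 ≠ i + 1 by omega))]
    exact hr.symm
  have hsa1 : (sA n i h * w)⁻¹ ⟨i + 1, by omega⟩ = p := by
    simp only [sA, mul_inv_rev, Equiv.Perm.mul_apply, Equiv.swap_inv]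
    rw [Equiv.swap_apply_right]
    exact hp.symm
  rcases lt_or_gt_of_ne hne with hpr | hpr
  · -- p < r : subword [i+1, i+3, i+2]
    have hperm : (List.finRange n).filter (fun k => decide (k = p ∨ k = q ∨ k = r)) =
        [p, r, q] := by
      have hc : (List.finRange n).filter (fun k => decide (k = p ∨ k = q ∨ k = r)) =
          (List.finRange n).filter (fun k => decide (k = p ∨ k = r ∨ k = q)) :=
        List.filter_congr (fun k _ => by simp only [decide_eq_decide]; tauto)
      rw [hc, filt3_fin n p r q hpr hrq]
    have hA : (wordOf w).filter (fun a => decide (a = i + 1 ∨ a = i + 2 ∨ a = i + 3)) =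
        [i + 1, i + 3, i + 2] := by
      rw [hword, hperm]
      simp [ep, eq', er]
    refine ⟨Or.inl hA, ?_⟩
    have hcnd : ¬ ((sA n i h * w)⁻¹ ⟨i + 2, h⟩ < (sA n i h * w)⁻¹ ⟨i + 1, by omega⟩) := by
      simp only [hsa2, hsa1]
      exact asymm hpr
    have hvt : vTAB n i h w = sA n i h * w := by
      unfold vTAB
      rw [if_neg hcnd]
    rw [hvt, hA, if_pos rfl]
    show wordOf (Equiv.swap (⟨i, by omega⟩ : Fin n) ⟨i + 1, by omega⟩ * w) = _
    rw [wordOf_swap n _ _ (Fin.ne_of_val_ne (show i ≠ i + 1 by omega)) w]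
  · -- r < p : subword [i+3, i+1, i+2]
    have hperm : (List.finRange n).filter (fun k => decide (k = p ∨ k = q ∨ k = r)) =
        [r, p, q] := by
      have hc : (List.finRange n).filter (fun k => decide (k = p ∨ k = q ∨ k = r)) =
          (List.finRange n).filter (fun k => decide (k = r ∨ k = p ∨ k = q)) :=
        List.filter_congr (fun k _ => by simp only [decide_eq_decide]; tauto)
      rw [hc, filt3_fin n r p q hpr hpq]
    have hA : (wordOf w).filter (fun a => decide (a = i + 1 ∨ a = i + 2 ∨ a = i + 3)) =
        [i + 3, i + 1, i + 2] := by
      rw [hword, hperm]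
      simp [ep, eq', er]
    refine ⟨Or.inr hA, ?_⟩
    have hcnd : (sA n i h * w)⁻¹ ⟨i + 2, h⟩ < (sA n i h * w)⁻¹ ⟨i + 1, by omega⟩ := by
      simp only [hsa2, hsa1]
      exact hpr
    have hvt : vTAB n i h w = sB n i h * w := by
      unfold vTAB
      rw [if_pos hcnd]
    have hcond : ¬ ((wordOf w).filter (fun a => decide (a = i + 1 ∨ a = i + 2 ∨ a = i + 3)) =
        [i + 1, i + 3, i + 2]) := by
      rw [hA]
      simp
    rw [hvt, if_neg hcond]
    show wordOf (Equiv.swap (⟨i + 1, by omega⟩ : Fin n) ⟨i + 2, h⟩ * w) = _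
    rw [wordOf_swap n _ _ (Fin.ne_of_val_ne (show i + 1 ≠ i + 2 by omega)) w]
end
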